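/- arXiv:2201.09513 — 4 statements merged into one kernel-verified Lean document; each statement's English description precedes it below -/
import Mathlib

section
/- Let k be an integer with k ∉ {0,1}, and let V be a complex linear subspace of the space M_p(ℂ) of p×p complex matrices with I_p ∈ V. Suppose there is an open neighborhood S of I_p in V (in the subspace topology of V) such that every matrix A ∈ S is invertible and satisfies A^k ∈ V. Then: (i) AB + BA ∈ V for all A, B ∈ V; (ii) A⁻¹ ∈ V for every invertible A ∈ V; consequently A^r ∈ V for every A ∈ V and every positive integer r, and A^r ∈ V for every invertible A ∈ V and every negative integer r. -/
open Matrix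


section Aux
variable {R : Type*} [Ring R]

def wpow (x : R) : ℕ → R
  | 0 => 0
  | n+1 => n • (1 : R) + wpow x n * (1 + x)

lemma wpow_spec (x : R) (n : ℕ) : (1 + x) ^ n = 1 + n • x + x ^ 2 * wpow x n := by
  induction n with
  | zero => simp [wpow]
  | succ n ih =>
    rw [pow_succ, ih, wpow]
    simp only [mul_add, add_mul, mul_one, one_mul, smul_mul_assoc, mul_smul_comm, succ_nsmul,
      pow_two, mul_assoc]
    abel

def wneg (y : R) : ℕ → R
  | 0 => 0
  | m+1 => (m+1) • y + wneg y m * y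

lemma wneg_spec (x y : R) (hxy : (1 + x) * y = 1) (m : ℕ) :
    y ^ m = 1 - m • x + x ^ 2 * wneg y m := by
  have h1 : y = 1 - x * y := by
    rw [eq_sub_iff_add_eq, add_comm]; rw [add_mul, one_mul, add_comm] at hxy; exact hxy
  have h2 : x * y = x - x ^ 2 * y := by
    conv_lhs => rw [h1]
    rw [mul_sub, mul_one, ← mul_assoc, ← pow_two]
  have hy : y = 1 - x + x ^ 2 * y := by
    conv_lhs => rw [h1, h2]
    abel
  induction m with
  | zero => simp [wneg]
  | succ m ih =>
    rw [pow_succ, ih, wneg]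
    calc (1 - m • x + x ^ 2 * wneg y m) * y
        = y - m • (x * y) + x ^ 2 * (wneg y m * y) := by
          simp only [sub_mul, add_mul, one_mul, smul_mul_assoc, mul_assoc]
      _ = (1 - x + x ^ 2 * y) - m • (x - x ^ 2 * y) + x ^ 2 * (wneg y m * y) := by
          rw [← hy, ← h2]
      _ = 1 - (m+1) • x + x ^ 2 * ((m+1) • y + wneg y m * y) := by
          simp only [mul_add, mul_smul_comm, smul_sub, succ_nsmul, add_smul, one_smul]
          abel

lemma wpow_zero (n : ℕ) : wpow (0 : R) n = (n.choose 2) • (1 : R) := by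
  induction n with
  | zero => simp [wpow]
  | succ n ih =>
    simp [wpow, ih, Nat.choose_succ_succ, Nat.choose_one_right, add_smul]

lemma wneg_one (m : ℕ) : wneg (1 : R) m = ((m+1).choose 2) • (1 : R) := by
  induction m with
  | zero => simp [wneg]
  | succ m ih =>
    simp [wneg, ih, Nat.choose_succ_succ, Nat.choose_one_right, add_smul]
    abel

end Aux

section Cont

variable {p : ℕ}

lemma wpow_cont (A : Matrix (Fin p) (Fin p) ℂ) (n : ℕ) :
    Continuous fun t : ℂ => wpow (t • A) n := by
  induction n with
  | zero => simpa [wpow] using continuous_const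
  | succ n ih =>
    simp only [wpow]
    exact continuous_const.add (ih.mul (continuous_const.add (continuous_id.smul continuous_const)))

lemma wneg_cont (m : ℕ) : Continuous fun y : Matrix (Fin p) (Fin p) ℂ => wneg y m := by
  induction m with
  | zero => simpa [wneg] using continuous_const
  | succ m ih =>
    simp only [wneg]
    exact (((continuous_id : Continuous fun y : Matrix (Fin p) (Fin p) ℂ => y).nsmul (m+1)).add (ih.mul continuous_id))

end Cont

/-- If `V` is a complex subspace of `p × p` matrices containing `I`,
and every matrix `A` in an open neighborhood `S` of `I` in `V` (subspace topology)
is invertible with `A ^ k ∈ V`, then `V` is closed under Jordan products, inverses of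
invertible elements, positive powers, and negative powers of invertible elements. -/
theorem stmt_0 (p : ℕ) (k : ℤ) (hk0 : k ≠ 0) (hk1 : k ≠ 1)
    (V : Submodule ℂ (Matrix (Fin p) (Fin p) ℂ))
    (hIV : (1 : Matrix (Fin p) (Fin p) ℂ) ∈ V)
    (S : Set (Matrix (Fin p) (Fin p) ℂ))
    (hSsub : S ⊆ (V : Set (Matrix (Fin p) (Fin p) ℂ)))
    (hSopen : ∃ U : Set (Matrix (Fin p) (Fin p) ℂ), IsOpen U ∧ S = U ∩ (V : Set (Matrix (Fin p) (Fin p) ℂ)))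
    (hS1 : (1 : Matrix (Fin p) (Fin p) ℂ) ∈ S)
    (hSinv : ∀ A ∈ S, IsUnit A)
    (hSk : ∀ A ∈ S, A ^ k ∈ V) :
    (∀ A ∈ V, ∀ B ∈ V, A * B + B * A ∈ V) ∧
    (∀ A ∈ V, IsUnit A → A⁻¹ ∈ V) ∧
    (∀ A ∈ V, ∀ r : ℕ, 0 < r → A ^ r ∈ V) ∧
    (∀ A ∈ V, IsUnit A → ∀ r : ℤ, r < 0 → A ^ r ∈ V) := by
  classical
  -- Step 1: V is closed under squaring.
  have sq_mem : ∀ A ∈ V, A * A ∈ V := by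
    intro A hA
    obtain ⟨U, hU, hSU⟩ := hSopen
    have h1U : (1 : Matrix (Fin p) (Fin p) ℂ) ∈ U := (hSU ▸ hS1).1
    have ccont : Continuous fun t : ℂ => (1 : Matrix (Fin p) (Fin p) ℂ) + t • A :=
      continuous_const.add (continuous_id.smul continuous_const)
    have hpre : (fun t : ℂ => (1 : Matrix (Fin p) (Fin p) ℂ) + t • A) ⁻¹' U ∈ nhds (0 : ℂ) := by
      apply ccont.continuousAt.preimage_mem_nhds
      have : (1 : Matrix (Fin p) (Fin p) ℂ) + (0 : ℂ) • A = 1 := by simp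
      rw [this]
      exact hU.mem_nhds h1U
    obtain ⟨ε, εpos, hball⟩ := Metric.mem_nhds_iff.mp hpre
    have hmemS : ∀ t : ℂ, ‖t‖ < ε → (1 + t • A) ∈ S := by
      intro t ht
      rw [hSU]
      refine ⟨hball ?_, V.add_mem hIV (V.smul_mem t hA)⟩
      simpa [Metric.mem_ball, dist_zero_right] using ht
    -- generic limit argument
    have key : ∀ (w : ℂ → Matrix (Fin p) (Fin p) ℂ) (γ : ℕ), 0 < γ →
        ContinuousAt w 0 → w 0 = γ • (1 : Matrix (Fin p) (Fin p) ℂ) →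
        (∀ t : ℂ, t ≠ 0 → ‖t‖ < ε → (A * A) * w t ∈ V) → A * A ∈ V := by
      intro w γ hγ hwc hw0 hmem
      have hVc : IsClosed (V : Set (Matrix (Fin p) (Fin p) ℂ)) :=
        Submodule.closed_of_finiteDimensional V
      have htend : Filter.Tendsto (fun t => (A * A) * w t) (nhdsWithin (0 : ℂ) {(0 : ℂ)}ᶜ)
          (nhds ((A * A) * w 0)) :=
        (Filter.Tendsto.mul tendsto_const_nhds hwc).mono_left nhdsWithin_le_nhds
      have hev : ∀ᶠ t in nhdsWithin (0 : ℂ) {(0 : ℂ)}ᶜ, (A * A) * w t ∈ V := by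
        filter_upwards [nhdsWithin_le_nhds (Metric.ball_mem_nhds (0 : ℂ) εpos),
          self_mem_nhdsWithin] with t ht ht0
        exact hmem t ht0 (by simpa [Metric.mem_ball, dist_zero_right] using ht)
      have hmemV : (A * A) * w 0 ∈ V := hVc.mem_of_tendsto htend hev
      rw [hw0] at hmemV
      have h2 : (A * A) * ((γ : ℕ) • (1 : Matrix (Fin p) (Fin p) ℂ)) = (γ : ℂ) • (A * A) := by
        rw [← Nat.cast_smul_eq_nsmul ℂ, mul_smul_comm, mul_one]
      rw [h2] at hmemV
      have := V.smul_mem ((γ : ℂ))⁻¹ hmemV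
      rwa [smul_smul, inv_mul_cancel₀ (Nat.cast_ne_zero.mpr hγ.ne'), one_smul] at this
    -- extraction of the quadratic part from membership
    have extract : ∀ (t : ℂ) (W : Matrix (Fin p) (Fin p) ℂ), t ≠ 0 →
        (t • A) ^ 2 * W ∈ V → (A * A) * W ∈ V := by
      intro t W ht h
      have heq : (t • A) ^ 2 * W = t ^ 2 • ((A * A) * W) := by
        rw [smul_pow, pow_two A, smul_mul_assoc]
      rw [heq] at h
      have := V.smul_mem ((t ^ 2)⁻¹) h
      rwa [smul_smul, inv_mul_cancel₀ (pow_ne_zero 2 ht), one_smul] at this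
    rcases k with n | m
    · -- k = n ≥ 2
      have hn2 : 2 ≤ n := by
        have h0 : (n : ℤ) ≠ 0 := hk0
        have h1 : (n : ℤ) ≠ 1 := hk1
        omega
      apply key (fun t => wpow (t • A) n) (n.choose 2) (Nat.choose_pos hn2)
        (wpow_cont A n).continuousAt (by simp [wpow_zero])
      intro t ht0 htε
      have h := hSk _ (hmemS t htε)
      rw [show ((Int.ofNat n : ℤ)) = (n : ℤ) from rfl, zpow_natCast, wpow_spec] at h
      have h2 : (t • A) ^ 2 * wpow (t • A) n ∈ V := by
        have hs := V.sub_mem h (V.add_mem hIV (nsmul_mem (V.smul_mem t hA) n))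
        have heq : (1 + n • (t • A) + (t • A) ^ 2 * wpow (t • A) n) - (1 + n • (t • A))
            = (t • A) ^ 2 * wpow (t • A) n := by abel
        rwa [heq] at hs
      exact extract t _ ht0 h2
    · -- k = -(m+1)
      apply key (fun t => wneg ((1 + t • A)⁻¹) (m + 1)) ((m + 2).choose 2) (Nat.choose_pos (by omega))
      · -- continuity
        have hinv : ContinuousAt (fun t : ℂ => (1 + t • A)⁻¹) 0 := by
          have h0 : (1 : Matrix (Fin p) (Fin p) ℂ) + (0 : ℂ) • A = 1 := by simp
          have hctA : ContinuousAt Inv.inv ((1 : Matrix (Fin p) (Fin p) ℂ) + (0 : ℂ) • A) := by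
            rw [h0]
            apply continuousAt_matrix_inv
            rw [Matrix.det_one]
            rw [show (Ring.inverse : ℂ → ℂ) = Inv.inv from funext fun x => Ring.inverse_eq_inv x]
            exact continuousAt_inv₀ one_ne_zero
          exact ContinuousAt.comp (g := Inv.inv) (f := fun t : ℂ => 1 + t • A) (x := (0:ℂ)) hctA ccont.continuousAt
        exact ((wneg_cont (m + 1)).continuousAt.comp hinv : _)
      · simp [wneg_one]
      · intro t ht0 htε
        have hSt := hmemS t htε
        have hdet : IsUnit (1 + t • A).det := (Matrix.isUnit_iff_isUnit_det _).mp (hSinv _ hSt)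
        have hxy : (1 + t • A) * (1 + t • A)⁻¹ = 1 := Matrix.mul_nonsing_inv _ hdet
        have h := hSk _ hSt
        rw [zpow_negSucc, ← Matrix.inv_pow',
          wneg_spec (t • A) ((1 + t • A)⁻¹) hxy (m + 1)] at h
        have h2 : (t • A) ^ 2 * wneg ((1 + t • A)⁻¹) (m + 1) ∈ V := by
          have hs := V.sub_mem h (V.sub_mem hIV (nsmul_mem (V.smul_mem t hA) (m + 1)))
          have heq : (1 - (m + 1) • (t • A) + (t • A) ^ 2 * wneg ((1 + t • A)⁻¹) (m + 1))
              - (1 - (m + 1) • (t • A)) = (t • A) ^ 2 * wneg ((1 + t • A)⁻¹) (m + 1) := by abel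
          rwa [heq] at hs
        exact extract t _ ht0 h2
  -- Step 2: Jordan products.
  have jordan : ∀ A ∈ V, ∀ B ∈ V, A * B + B * A ∈ V := by
    intro A hA B hB
    have h := V.sub_mem (V.sub_mem (sq_mem _ (V.add_mem hA hB)) (sq_mem _ hA)) (sq_mem _ hB)
    have heq : (A + B) * (A + B) - A * A - B * B = A * B + B * A := by noncomm_ring
    rwa [heq] at h
  -- Step 3: positive powers.
  have pow_mem : ∀ A ∈ V, ∀ r : ℕ, 0 < r → A ^ r ∈ V := by
    intro A hA r hr
    induction r with
    | zero => omega
    | succ r ih =>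
      rcases Nat.eq_zero_or_pos r with rfl | hrpos
      · simpa using hA
      · have hAr := ih hrpos
        have heq : A ^ (r + 1) = (2 : ℂ)⁻¹ • (A * A ^ r + A ^ r * A) := by
          rw [← pow_succ', ← pow_succ, ← two_smul ℂ, smul_smul,
            inv_mul_cancel₀ (two_ne_zero), one_smul]
        rw [heq]
        exact V.smul_mem _ (jordan A hA _ hAr)
  -- Step 4: inverses via Cayley–Hamilton.
  have inv_mem : ∀ A ∈ V, IsUnit A → A⁻¹ ∈ V := by
    intro A hA hu
    have hc0 : A.charpoly.coeff 0 ≠ 0 := by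
      have hdet := (Matrix.isUnit_iff_isUnit_det A).mp hu
      rw [Matrix.det_eq_sign_charpoly_coeff] at hdet
      intro h0
      rw [h0, mul_zero] at hdet
      exact hdet.ne_zero rfl
    have hCH := Matrix.aeval_self_charpoly A
    rw [Polynomial.aeval_eq_sum_range] at hCH
    rw [Matrix.charpoly_natDegree_eq_dim, Fintype.card_fin] at hCH
    rw [Finset.sum_range_succ'] at hCH
    have hsum : ∑ i ∈ Finset.range p, A.charpoly.coeff (i + 1) • A ^ (i + 1)
        = -(A.charpoly.coeff 0) • 1 := by
      rw [neg_smul, ← pow_zero A]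
      exact eq_neg_of_add_eq_zero_left hCH
    set B := (-(A.charpoly.coeff 0)⁻¹) •
      ∑ i ∈ Finset.range p, A.charpoly.coeff (i + 1) • A ^ i with hB
    have hAB : A * B = 1 := by
      rw [hB, mul_smul_comm, Finset.mul_sum]
      have : ∀ i ∈ Finset.range p, A * (A.charpoly.coeff (i + 1) • A ^ i)
          = A.charpoly.coeff (i + 1) • A ^ (i + 1) := by
        intro i _
        rw [mul_smul_comm, ← pow_succ']
      rw [Finset.sum_congr rfl this, hsum, smul_smul]
      rw [neg_mul_neg, inv_mul_cancel₀ hc0, one_smul]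
    rw [Matrix.inv_eq_right_inv hAB, hB]
    apply V.smul_mem
    apply Submodule.sum_mem
    intro i _
    apply V.smul_mem
    rcases Nat.eq_zero_or_pos i with rfl | hi
    · simpa using hIV
    · exact pow_mem A hA i hi
  refine ⟨jordan, inv_mem, pow_mem, ?_⟩
  -- Step 5: negative powers.
  intro A hA hu r hr
  obtain ⟨m, rfl⟩ : ∃ m : ℕ, r = Int.negSucc m := by
    refine ⟨(-(r + 1)).toNat, ?_⟩
    rw [Int.negSucc_eq]
    omega
  rw [zpow_negSucc, ← Matrix.inv_pow']
  exact pow_mem _ (inv_mem A hA hu) (m + 1) (Nat.succ_pos m)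
end

section
/- Let k be an integer with k ∉ {0,1}. Let V ⊆ M_p(ℂ) and W ⊆ M_q(ℂ) be complex linear subspaces with I_p ∈ V and I_q ∈ W, and suppose there is an open neighborhood S of I_p in V consisting of invertible matrices such that A^k ∈ V for all A ∈ S. If ψ : V → W is a complex linear map with ψ(I_p) = I_q and ψ(A^k) = ψ(A)^k for all A ∈ S, then: (i) ψ(AB + BA) = ψ(A)ψ(B) + ψ(B)ψ(A) for all A, B ∈ V; (ii) for every invertible A ∈ V, ψ(A) is invertible and ψ(A⁻¹) = ψ(A)⁻¹; consequently ψ(A^r) = ψ(A)^r for all A ∈ V and positive integers r, and ψ(A^r) = ψ(A)^r for all invertible A ∈ V and negative integers r. -/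
open Matrix Filter Topology

private lemma aux_inv_trunc {a : ℕ} (t : ℂ) (B : Matrix (Fin a) (Fin a) ℂ)
    (h : IsUnit (1 + t • B).det) :
    (1 + t • B)⁻¹ = 1 + (-t) • B + ((1:ℂ) * t ^ 2) • (B * B)
      + t ^ 3 • (-((1 + t • B)⁻¹ * (B * (B * B)))) := by
  have h1 : (1 + t • B) * (1 - t • B + (t ^ 2) • (B * B)) = 1 + t ^ 3 • (B * (B * B)) := by
    simp only [mul_add, mul_sub, add_mul, sub_mul, one_mul, mul_one, smul_mul_assoc,
      mul_smul_comm, smul_smul, Matrix.mul_assoc]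
    module
  have h2 : (1 + t • B)⁻¹ * ((1 + t • B) * (1 - t • B + (t ^ 2) • (B * B)))
      = (1 + t • B)⁻¹ * (1 + t ^ 3 • (B * (B * B))) := by rw [h1]
  rw [← Matrix.mul_assoc, Matrix.nonsing_inv_mul _ h, Matrix.one_mul, Matrix.mul_add,
    Matrix.mul_one, mul_smul_comm] at h2
  calc (1 + t • B)⁻¹
      = 1 - t • B + t ^ 2 • (B * B) - t ^ 3 • ((1 + t • B)⁻¹ * (B * (B * B))) :=
        eq_sub_of_add_eq h2.symm
    _ = 1 + (-t) • B + ((1:ℂ) * t ^ 2) • (B * B)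
        + t ^ 3 • (-((1 + t • B)⁻¹ * (B * (B * B)))) := by
        simp only [smul_neg]; module



private lemma aux_expand {R : Type} [Ring R] [Algebra ℂ R] (n : ℕ) (hn : 2 ≤ n) (t : ℂ) (B : R) :
    (1 + t • B) ^ n = 1 + ((n : ℂ) * t) • B + ((n.choose 2 : ℂ) * t ^ 2) • (B * B)
      + t ^ 3 • ∑ i ∈ Finset.Ico 3 (n + 1), ((n.choose i : ℂ) * t ^ (i - 3)) • B ^ i := by
  have h0 : (1 + t • B) ^ n
      = ∑ m ∈ Finset.range (n + 1), ((n.choose m : ℂ) * t ^ m) • B ^ m := by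
    rw [add_comm, (Commute.one_right (t • B)).add_pow]
    refine Finset.sum_congr rfl fun m hm => ?_
    have hcast : ((n.choose m : ℕ) : R) = ((n.choose m : ℂ)) • (1 : R) := by
      rw [← map_natCast (algebraMap ℂ R), Algebra.algebraMap_eq_smul_one]
    rw [one_pow, mul_one, smul_pow, hcast, mul_smul_comm, mul_one, smul_smul]
  rw [h0, Finset.range_eq_Ico,
    ← Finset.sum_Ico_consecutive _ (Nat.zero_le 3) (show 3 ≤ n + 1 by omega)]
  congr 1
  · rw [← Finset.range_eq_Ico, Finset.sum_range_succ, Finset.sum_range_succ,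
      Finset.sum_range_one]
    simp [Nat.choose_one_right, pow_two, mul_comm]
  · rw [Finset.smul_sum]
    refine Finset.sum_congr rfl fun m hm => ?_
    rw [smul_smul]
    congr 1
    have hm3 : 3 ≤ m := (Finset.mem_Ico.mp hm).1
    have ht : t ^ m = t ^ 3 * t ^ (m - 3) := by
      rw [← pow_add]; congr 1; omega
    rw [ht]; ring


private lemma aux_sq {a b : ℕ} (V : Submodule ℂ (Matrix (Fin a) (Fin a) ℂ))
    (hIV : (1 : Matrix (Fin a) (Fin a) ℂ) ∈ V)
    (Ψ : Matrix (Fin a) (Fin a) ℂ →ₗ[ℂ] Matrix (Fin b) (Fin b) ℂ)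
    (hΨ1 : Ψ 1 = 1)
    {A : Matrix (Fin a) (Fin a) ℂ} (hA : A ∈ V)
    (c : ℂ) (hc : c ≠ 0) (al : ℂ → ℂ)
    (F G1 : ℂ → Matrix (Fin a) (Fin a) ℂ) (G2 : ℂ → Matrix (Fin b) (Fin b) ℂ)
    (hG1 : ContinuousAt G1 0) (hG2 : ContinuousAt G2 0)
    (hFmem : ∀ᶠ t in 𝓝[≠] (0:ℂ), F t ∈ V)
    (hexp1 : ∀ᶠ t in 𝓝[≠] (0:ℂ), F t = 1 + (al t) • A + (c * t ^ 2) • (A * A) + t ^ 3 • G1 t)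
    (hexp2 : ∀ᶠ t in 𝓝[≠] (0:ℂ),
      Ψ (F t) = 1 + (al t) • (Ψ A) + (c * t ^ 2) • (Ψ A * Ψ A) + t ^ 3 • G2 t) :
    A * A ∈ V ∧ Ψ (A * A) = Ψ A * Ψ A := by
  have hΨcont : Continuous Ψ := Ψ.continuous_of_finiteDimensional
  constructor
  · have hv : ∀ᶠ t in 𝓝[≠] (0:ℂ), A * A + (c⁻¹ * t) • G1 t ∈ V := by
      filter_upwards [hFmem, hexp1, self_mem_nhdsWithin] with t h1 h2 ht0
      have ht0' : (t : ℂ) ≠ 0 := ht0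
      have hsc : c * t ^ 2 ≠ 0 := mul_ne_zero hc (pow_ne_zero _ ht0')
      have key : A * A + (c⁻¹ * t) • G1 t = (c * t ^ 2)⁻¹ • (F t - 1 - (al t) • A) := by
        rw [h2]
        match_scalars <;> field_simp <;> ring
      rw [key]
      exact V.smul_mem _ (V.sub_mem (V.sub_mem h1 hIV) (V.smul_mem _ hA))
    have hten : Tendsto (fun t : ℂ => A * A + (c⁻¹ * t) • G1 t) (𝓝[≠] 0) (𝓝 (A * A)) := by
      have hco : ContinuousAt (fun t : ℂ => A * A + (c⁻¹ * t) • G1 t) 0 :=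
        continuousAt_const.add ((continuousAt_const.mul continuousAt_id).smul hG1)
      have := hco.tendsto
      simp only [mul_zero, zero_smul, add_zero] at this
      exact this.mono_left nhdsWithin_le_nhds
    exact V.closed_of_finiteDimensional.mem_of_tendsto hten hv
  · have heq : ∀ᶠ t in 𝓝[≠] (0:ℂ),
        c • (Ψ (A * A) - Ψ A * Ψ A) = t • (G2 t - Ψ (G1 t)) := by
      filter_upwards [hexp1, hexp2, self_mem_nhdsWithin] with t h1 h2 ht0
      have ht0' : (t : ℂ) ≠ 0 := ht0
      have ht2 : (t ^ 2 : ℂ) ≠ 0 := pow_ne_zero _ ht0'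
      refine smul_right_injective (Matrix (Fin b) (Fin b) ℂ) ht2 ?_
      have e1 : Ψ (F t) = 1 + (al t) • Ψ A + (c * t ^ 2) • Ψ (A * A) + t ^ 3 • Ψ (G1 t) := by
        rw [h1]; simp only [map_add, _root_.map_smul, hΨ1]
      have hbig := e1.symm.trans h2
      calc (t ^ 2 : ℂ) • (c • (Ψ (A * A) - Ψ A * Ψ A))
          = (1 + (al t) • Ψ A + (c * t ^ 2) • Ψ (A * A) + t ^ 3 • Ψ (G1 t))
            - (1 + (al t) • Ψ A + (c * t ^ 2) • (Ψ A * Ψ A) + t ^ 3 • Ψ (G1 t)) := by module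
        _ = (1 + (al t) • Ψ A + (c * t ^ 2) • (Ψ A * Ψ A) + t ^ 3 • G2 t)
            - (1 + (al t) • Ψ A + (c * t ^ 2) • (Ψ A * Ψ A) + t ^ 3 • Ψ (G1 t)) := by rw [hbig]
        _ = (t ^ 2 : ℂ) • (t • (G2 t - Ψ (G1 t))) := by module
    have htend : Tendsto (fun t : ℂ => t • (G2 t - Ψ (G1 t))) (𝓝[≠] 0) (𝓝 0) := by
      have hco : ContinuousAt (fun t : ℂ => t • (G2 t - Ψ (G1 t))) 0 :=
        continuousAt_id.smul (hG2.sub (hΨcont.continuousAt.comp hG1))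
      have := hco.tendsto
      simp only [zero_smul] at this
      exact this.mono_left nhdsWithin_le_nhds
    have h0 : c • (Ψ (A * A) - Ψ A * Ψ A) = 0 :=
      tendsto_nhds_unique tendsto_const_nhds (Filter.Tendsto.congr' (heq.mono fun t ht => ht.symm) htend)
    rcases smul_eq_zero.mp h0 with h | h
    · exact absurd h hc
    · exact sub_eq_zero.mp h
set_option maxHeartbeats 2000000 in
/-- A unital linear map `ψ : V → W` between matrix subspaces that preserves
`k`-th powers on an open neighborhood of the identity in `V` (consisting of invertible
matrices) preserves Jordan products, inverses, and all integer powers. -/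
theorem stmt_1 (p q : ℕ) (k : ℤ) (hk0 : k ≠ 0) (hk1 : k ≠ 1)
    (V : Submodule ℂ (Matrix (Fin p) (Fin p) ℂ))
    (W : Submodule ℂ (Matrix (Fin q) (Fin q) ℂ))
    (hIV : (1 : Matrix (Fin p) (Fin p) ℂ) ∈ V)
    (hIW : (1 : Matrix (Fin q) (Fin q) ℂ) ∈ W)
    (S : Set (Matrix (Fin p) (Fin p) ℂ))
    (hSsub : S ⊆ (V : Set (Matrix (Fin p) (Fin p) ℂ)))
    (hSopen : ∃ U : Set (Matrix (Fin p) (Fin p) ℂ), IsOpen U ∧ S = U ∩ (V : Set (Matrix (Fin p) (Fin p) ℂ)))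
    (hS1 : (1 : Matrix (Fin p) (Fin p) ℂ) ∈ S)
    (hSinv : ∀ A ∈ S, IsUnit A)
    (hSk : ∀ A ∈ S, A ^ k ∈ V)
    (ψ : V →ₗ[ℂ] W)
    (hψ1 : (ψ ⟨1, hIV⟩ : Matrix (Fin q) (Fin q) ℂ) = 1)
    (hψk : ∀ (A : Matrix (Fin p) (Fin p) ℂ) (hA : A ∈ S),
      (ψ ⟨A ^ k, hSk A hA⟩ : Matrix (Fin q) (Fin q) ℂ)
        = (ψ ⟨A, hSsub hA⟩ : Matrix (Fin q) (Fin q) ℂ) ^ k) :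
    (∀ A B : V, ∃ h : (A : Matrix (Fin p) (Fin p) ℂ) * (B : Matrix (Fin p) (Fin p) ℂ)
          + (B : Matrix (Fin p) (Fin p) ℂ) * (A : Matrix (Fin p) (Fin p) ℂ) ∈ V,
        (ψ ⟨(A : Matrix (Fin p) (Fin p) ℂ) * (B : Matrix (Fin p) (Fin p) ℂ)
          + (B : Matrix (Fin p) (Fin p) ℂ) * (A : Matrix (Fin p) (Fin p) ℂ), h⟩ : Matrix (Fin q) (Fin q) ℂ)
          = (ψ A : Matrix (Fin q) (Fin q) ℂ) * (ψ B : Matrix (Fin q) (Fin q) ℂ)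
            + (ψ B : Matrix (Fin q) (Fin q) ℂ) * (ψ A : Matrix (Fin q) (Fin q) ℂ)) ∧
    (∀ A : V, IsUnit (A : Matrix (Fin p) (Fin p) ℂ) →
      IsUnit (ψ A : Matrix (Fin q) (Fin q) ℂ) ∧
      ∃ h : (A : Matrix (Fin p) (Fin p) ℂ)⁻¹ ∈ V,
        (ψ ⟨(A : Matrix (Fin p) (Fin p) ℂ)⁻¹, h⟩ : Matrix (Fin q) (Fin q) ℂ)
          = (ψ A : Matrix (Fin q) (Fin q) ℂ)⁻¹) ∧
    (∀ A : V, ∀ r : ℕ, 0 < r → ∃ h : (A : Matrix (Fin p) (Fin p) ℂ) ^ r ∈ V,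
        (ψ ⟨(A : Matrix (Fin p) (Fin p) ℂ) ^ r, h⟩ : Matrix (Fin q) (Fin q) ℂ)
          = (ψ A : Matrix (Fin q) (Fin q) ℂ) ^ r) ∧
    (∀ A : V, IsUnit (A : Matrix (Fin p) (Fin p) ℂ) → ∀ r : ℤ, r < 0 →
      ∃ h : (A : Matrix (Fin p) (Fin p) ℂ) ^ r ∈ V,
        (ψ ⟨(A : Matrix (Fin p) (Fin p) ℂ) ^ r, h⟩ : Matrix (Fin q) (Fin q) ℂ)
          = (ψ A : Matrix (Fin q) (Fin q) ℂ) ^ r) := by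
  classical
  obtain ⟨U, hUopen, hSU⟩ := hSopen
  obtain ⟨V', hcompl⟩ := Submodule.exists_isCompl V
  set pr := V.linearProjOfIsCompl V' hcompl with hpr
  set Ψ : Matrix (Fin p) (Fin p) ℂ →ₗ[ℂ] Matrix (Fin q) (Fin q) ℂ :=
    W.subtype ∘ₗ (ψ ∘ₗ pr) with hΨdef
  have hΨ : ∀ (x : Matrix (Fin p) (Fin p) ℂ) (hx : x ∈ V),
      Ψ x = (ψ ⟨x, hx⟩ : Matrix (Fin q) (Fin q) ℂ) := by
    intro x hx
    have : pr x = ⟨x, hx⟩ := V.linearProjOfIsCompl_apply_left hcompl ⟨x, hx⟩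
    simp [hΨdef, this]
  have hΨ1 : Ψ 1 = 1 := (hΨ 1 hIV).trans hψ1
  -- the key square-preservation property
  have hSQ : ∀ A ∈ V, A * A ∈ V ∧ Ψ (A * A) = Ψ A * Ψ A := by
    intro A hA
    have hline : Continuous fun t : ℂ => 1 + t • A :=
      continuous_const.add (continuous_id.smul continuous_const)
    have hpt : (fun t : ℂ => 1 + t • A) 0 = 1 := by simp
    have h1U : (1 : Matrix (Fin p) (Fin p) ℂ) ∈ U := by
      have := hS1; rw [hSU] at this; exact this.1
    have hevU : ∀ᶠ t : ℂ in 𝓝 0, 1 + t • A ∈ U := by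
      have hmem : U ∈ 𝓝 ((fun t : ℂ => 1 + t • A) 0) := by rw [hpt]; exact hUopen.mem_nhds h1U
      exact hline.continuousAt.eventually_mem hmem
    have hevS : ∀ᶠ t : ℂ in 𝓝 0, 1 + t • A ∈ S := by
      filter_upwards [hevU] with t ht
      rw [hSU]; exact ⟨ht, V.add_mem hIV (V.smul_mem _ hA)⟩
    have hΨline : ∀ t : ℂ, Ψ (1 + t • A) = 1 + t • Ψ A := by
      intro t; rw [map_add, _root_.map_smul, hΨ1]
    have hevdet : ∀ᶠ t : ℂ in 𝓝 0, IsUnit (1 + t • Ψ A).det := by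
      have hdetc : Continuous fun t : ℂ => (1 + t • Ψ A).det :=
        (continuous_const.add (continuous_id.smul continuous_const)).matrix_det
      have hpt2 : (fun t : ℂ => (1 + t • Ψ A).det) 0 = 1 := by simp
      have ht : Tendsto (fun t : ℂ => (1 + t • Ψ A).det) (𝓝 0) (𝓝 1) := by
        simpa [ContinuousAt] using hdetc.continuousAt (x := 0)
      filter_upwards [ht.eventually_ne one_ne_zero] with t h
      exact isUnit_iff_ne_zero.mpr h
    have hinv1 : ContinuousAt Inv.inv (1 : Matrix (Fin p) (Fin p) ℂ) := by
      apply continuousAt_matrix_inv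
      rw [Matrix.det_one, Ring.inverse_eq_inv']
      exact continuousAt_inv₀ one_ne_zero
    have hdetX : ∀ t : ℂ, 1 + t • A ∈ S → IsUnit (1 + t • A).det := fun t ht =>
      (Matrix.isUnit_iff_isUnit_det _).mp (hSinv _ ht)
    rcases lt_or_ge k 0 with hkneg | hkpos
    · rcases eq_or_lt_of_le (show k ≤ -1 by omega) with hkm1 | hklt
      · -- case k = -1
        subst hkm1
        have hinv1q : ContinuousAt Inv.inv (1 : Matrix (Fin q) (Fin q) ℂ) := by
          apply continuousAt_matrix_inv
          rw [Matrix.det_one, Ring.inverse_eq_inv']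
          exact continuousAt_inv₀ one_ne_zero
        have hlineq : Continuous fun t : ℂ => 1 + t • Ψ A :=
          continuous_const.add (continuous_id.smul continuous_const)
        have hcontinv : ContinuousAt (fun t : ℂ => (1 + t • A)⁻¹) 0 := by
          have h1 : ContinuousAt Inv.inv ((fun t : ℂ => 1 + t • A) 0) := by
            rw [hpt]; exact hinv1
          exact ContinuousAt.comp (f := fun t : ℂ => 1 + t • A) (g := Inv.inv) h1
            hline.continuousAt
        have hcontinvq : ContinuousAt (fun t : ℂ => (1 + t • Ψ A)⁻¹) 0 := by
          have hptq : (fun t : ℂ => 1 + t • Ψ A) 0 = 1 := by simp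
          have h1 : ContinuousAt Inv.inv ((fun t : ℂ => 1 + t • Ψ A) 0) := by
            rw [hptq]; exact hinv1q
          exact ContinuousAt.comp (f := fun t : ℂ => 1 + t • Ψ A) (g := Inv.inv) h1
            hlineq.continuousAt
        refine aux_sq V hIV Ψ hΨ1 hA 1 one_ne_zero (fun t => -t)
          (fun t => (1 + t • A)⁻¹)
          (fun t => -((1 + t • A)⁻¹ * (A * (A * A))))
          (fun t => -((1 + t • Ψ A)⁻¹ * (Ψ A * (Ψ A * Ψ A)))) ?_ ?_ ?_ ?_ ?_
        · exact (hcontinv.mul continuousAt_const).neg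
        · exact (hcontinvq.mul continuousAt_const).neg
        · filter_upwards [hevS.filter_mono nhdsWithin_le_nhds] with t ht
          have := hSk _ ht; rwa [Matrix.zpow_neg_one] at this
        · filter_upwards [hevS.filter_mono nhdsWithin_le_nhds] with t ht
          exact aux_inv_trunc t A (hdetX t ht)
        · filter_upwards [hevS.filter_mono nhdsWithin_le_nhds,
            hevdet.filter_mono nhdsWithin_le_nhds] with t ht hdt
          have e : Ψ ((1 + t • A)⁻¹) = (1 + t • Ψ A)⁻¹ := by
            calc Ψ ((1 + t • A)⁻¹) = Ψ ((1 + t • A) ^ (-1 : ℤ)) := by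
                  rw [Matrix.zpow_neg_one]
              _ = (ψ ⟨(1 + t • A) ^ (-1 : ℤ), hSk _ ht⟩ : Matrix (Fin q) (Fin q) ℂ) := hΨ _ _
              _ = (ψ ⟨1 + t • A, hSsub ht⟩ : Matrix (Fin q) (Fin q) ℂ) ^ (-1 : ℤ) := hψk _ ht
              _ = (Ψ (1 + t • A)) ^ (-1 : ℤ) := by rw [hΨ _ (hSsub ht)]
              _ = (1 + t • Ψ A)⁻¹ := by rw [hΨline, Matrix.zpow_neg_one]
          exact e.trans (aux_inv_trunc t (Ψ A) hdt)
      · -- case k ≤ -2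
        obtain ⟨m, rfl⟩ : ∃ m : ℕ, k = Int.negSucc m := by
          rcases k with m' | m'
          · exact absurd hkneg (not_lt.mpr (Int.ofNat_nonneg m'))
          · exact ⟨m', rfl⟩
        have hk2 : Int.negSucc m ≤ -2 := by omega
        have h4 : (4 : ℤ) ≤ Int.negSucc m * Int.negSucc m := by
          nlinarith [hk2, sq_nonneg (Int.negSucc m + 2)]
        set n := (Int.negSucc m * Int.negSucc m).toNat with hndef
        have hkn : (n : ℤ) = Int.negSucc m * Int.negSucc m :=
          Int.toNat_of_nonneg (by linarith)
        have hn2 : 2 ≤ n := by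
          have : (2 : ℤ) ≤ (n : ℤ) := by rw [hkn]; linarith
          exact_mod_cast this
        have hcne : ((n.choose 2 : ℕ) : ℂ) ≠ 0 :=
          Nat.cast_ne_zero.mpr (Nat.choose_pos hn2).ne'
        have hcpow : Continuous fun t : ℂ => (1 + t • A) ^ (m + 1) := hline.pow (m + 1)
        have hptp : (fun t : ℂ => (1 + t • A) ^ (m + 1)) 0 = 1 := by simp
        have hcontinvp : ContinuousAt (fun t : ℂ => ((1 + t • A) ^ (m + 1))⁻¹) 0 := by
          have h1 : ContinuousAt Inv.inv ((fun t : ℂ => (1 + t • A) ^ (m + 1)) 0) := by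
            rw [hptp]; exact hinv1
          exact ContinuousAt.comp (f := fun t : ℂ => (1 + t • A) ^ (m + 1)) (g := Inv.inv) h1
            hcpow.continuousAt
        have hevSk : ∀ᶠ t : ℂ in 𝓝 0, (1 + t • A) ^ (Int.negSucc m) ∈ S := by
          have hvalU : ∀ᶠ t : ℂ in 𝓝 0, ((1 + t • A) ^ (m + 1))⁻¹ ∈ U := by
            apply hcontinvp.eventually_mem
            simpa using hUopen.mem_nhds h1U
          filter_upwards [hvalU, hevS] with t h1 h2
          rw [hSU]
          exact ⟨by rw [zpow_negSucc]; exact h1, hSk _ h2⟩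
        refine aux_sq V hIV Ψ hΨ1 hA (n.choose 2 : ℂ) hcne (fun t => (n : ℂ) * t)
          (fun t => (1 + t • A) ^ n)
          (fun t => ∑ i ∈ Finset.Ico 3 (n + 1), ((n.choose i : ℂ) * t ^ (i - 3)) • A ^ i)
          (fun t => ∑ i ∈ Finset.Ico 3 (n + 1), ((n.choose i : ℂ) * t ^ (i - 3)) • (Ψ A) ^ i)
          ?_ ?_ ?_ ?_ ?_
        · exact (continuous_finset_sum _ fun i _ =>
            (continuous_const.mul (continuous_pow _)).smul continuous_const).continuousAt
        · exact (continuous_finset_sum _ fun i _ =>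
            (continuous_const.mul (continuous_pow _)).smul continuous_const).continuousAt
        · filter_upwards [hevS.filter_mono nhdsWithin_le_nhds,
            hevSk.filter_mono nhdsWithin_le_nhds] with t htS htk
          have h5 : (1 + t • A) ^ ((n : ℕ) : ℤ)
              = ((1 + t • A) ^ (Int.negSucc m)) ^ (Int.negSucc m) := by
            rw [hkn]; exact Matrix.zpow_mul _ (hdetX t htS) _ _
          have h6 := hSk _ htk
          rw [← h5, zpow_natCast] at h6
          exact h6
        · exact Eventually.of_forall fun t => aux_expand n hn2 t A
        · filter_upwards [hevS.filter_mono nhdsWithin_le_nhds,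
            hevSk.filter_mono nhdsWithin_le_nhds,
            hevdet.filter_mono nhdsWithin_le_nhds] with t htS htk hdt
          have hdq : IsUnit (Ψ (1 + t • A)).det := by rw [hΨline]; exact hdt
          have e1 : Ψ ((1 + t • A) ^ (Int.negSucc m))
              = (Ψ (1 + t • A)) ^ (Int.negSucc m) := by
            calc Ψ ((1 + t • A) ^ (Int.negSucc m))
                = (ψ ⟨(1 + t • A) ^ (Int.negSucc m), hSk _ htS⟩ : Matrix (Fin q) (Fin q) ℂ) :=
                  hΨ _ _
              _ = (ψ ⟨1 + t • A, hSsub htS⟩ : Matrix (Fin q) (Fin q) ℂ) ^ (Int.negSucc m) :=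
                  hψk _ htS
              _ = (Ψ (1 + t • A)) ^ (Int.negSucc m) := by rw [hΨ _ (hSsub htS)]
          have e : Ψ ((1 + t • A) ^ n) = (Ψ (1 + t • A)) ^ n := by
            calc Ψ ((1 + t • A) ^ n) = Ψ ((1 + t • A) ^ ((n : ℕ) : ℤ)) := by rw [zpow_natCast]
              _ = Ψ (((1 + t • A) ^ (Int.negSucc m)) ^ (Int.negSucc m)) := by
                  rw [hkn, Matrix.zpow_mul _ (hdetX t htS)]
              _ = (ψ ⟨((1 + t • A) ^ (Int.negSucc m)) ^ (Int.negSucc m), hSk _ htk⟩ :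
                    Matrix (Fin q) (Fin q) ℂ) := hΨ _ _
              _ = (ψ ⟨(1 + t • A) ^ (Int.negSucc m), hSsub htk⟩ :
                    Matrix (Fin q) (Fin q) ℂ) ^ (Int.negSucc m) := hψk _ htk
              _ = (Ψ ((1 + t • A) ^ (Int.negSucc m))) ^ (Int.negSucc m) := by
                  rw [hΨ _ (hSsub htk)]
              _ = ((Ψ (1 + t • A)) ^ (Int.negSucc m)) ^ (Int.negSucc m) := by rw [e1]
              _ = (Ψ (1 + t • A)) ^ (Int.negSucc m * Int.negSucc m) :=
                  (Matrix.zpow_mul _ hdq _ _).symm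
              _ = (Ψ (1 + t • A)) ^ ((n : ℕ) : ℤ) := by rw [hkn]
              _ = (Ψ (1 + t • A)) ^ (n : ℕ) := zpow_natCast _ _
          exact e.trans (by rw [hΨline]; exact aux_expand n hn2 t (Ψ A))
    · -- case k ≥ 2
      have hk2 : 2 ≤ k := by omega
      set n := k.toNat with hndef
      have hn2 : 2 ≤ n := by omega
      have hkn : (n : ℤ) = k := Int.toNat_of_nonneg (by omega)
      have hcne : ((n.choose 2 : ℕ) : ℂ) ≠ 0 :=
        Nat.cast_ne_zero.mpr (Nat.choose_pos hn2).ne'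
      refine aux_sq V hIV Ψ hΨ1 hA (n.choose 2 : ℂ) hcne (fun t => (n : ℂ) * t)
        (fun t => (1 + t • A) ^ n)
        (fun t => ∑ i ∈ Finset.Ico 3 (n + 1), ((n.choose i : ℂ) * t ^ (i - 3)) • A ^ i)
        (fun t => ∑ i ∈ Finset.Ico 3 (n + 1), ((n.choose i : ℂ) * t ^ (i - 3)) • (Ψ A) ^ i)
        ?_ ?_ ?_ ?_ ?_
      · exact (continuous_finset_sum _ fun i _ =>
          (continuous_const.mul (continuous_pow _)).smul continuous_const).continuousAt
      · exact (continuous_finset_sum _ fun i _ =>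
          (continuous_const.mul (continuous_pow _)).smul continuous_const).continuousAt
      · filter_upwards [hevS.filter_mono nhdsWithin_le_nhds] with t ht
        have := hSk _ ht
        rwa [← hkn, zpow_natCast] at this
      · exact Eventually.of_forall fun t => aux_expand n hn2 t A
      · filter_upwards [hevS.filter_mono nhdsWithin_le_nhds] with t ht
        have e : Ψ ((1 + t • A) ^ n) = (Ψ (1 + t • A)) ^ n := by
          calc Ψ ((1 + t • A) ^ n) = Ψ ((1 + t • A) ^ k) := by rw [← hkn, zpow_natCast]
            _ = (ψ ⟨(1 + t • A) ^ k, hSk _ ht⟩ : Matrix (Fin q) (Fin q) ℂ) := hΨ _ _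
            _ = (ψ ⟨1 + t • A, hSsub ht⟩ : Matrix (Fin q) (Fin q) ℂ) ^ k := hψk _ ht
            _ = (Ψ (1 + t • A)) ^ k := by rw [hΨ _ (hSsub ht)]
            _ = (Ψ (1 + t • A)) ^ n := by rw [← hkn, zpow_natCast]
        exact e.trans (by rw [hΨline]; exact aux_expand n hn2 t (Ψ A))
  -- Jordan products
  have hJor : ∀ A ∈ V, ∀ B ∈ V, (A * B + B * A ∈ V) ∧
      Ψ (A * B + B * A) = Ψ A * Ψ B + Ψ B * Ψ A := by
    intro A hA B hB
    obtain ⟨m1, e1⟩ := hSQ (A + B) (V.add_mem hA hB)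
    obtain ⟨m2, e2⟩ := hSQ A hA
    obtain ⟨m3, e3⟩ := hSQ B hB
    have hid : A * B + B * A = (A + B) * (A + B) - A * A - B * B := by noncomm_ring
    constructor
    · rw [hid]; exact V.sub_mem (V.sub_mem m1 m2) m3
    · rw [hid, map_sub, map_sub, e1, e2, e3, map_add]; noncomm_ring
  -- all natural powers
  have hPow : ∀ A ∈ V, ∀ m : ℕ, A ^ m ∈ V ∧ Ψ (A ^ m) = Ψ A ^ m := by
    intro A hA m
    induction m with
    | zero => simpa [pow_zero] using ⟨hIV, hΨ1⟩
    | succ m ih =>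
      obtain ⟨hm, he⟩ := ih
      obtain ⟨hj, hje⟩ := hJor A hA (A ^ m) hm
      have h2 : A * A ^ m + A ^ m * A = (2 : ℂ) • A ^ (m + 1) := by
        rw [← pow_succ', ← pow_succ, two_smul]
      have hid : A ^ (m + 1) = (2 : ℂ)⁻¹ • (A * A ^ m + A ^ m * A) := by
        rw [h2, smul_smul]; norm_num
      constructor
      · rw [hid]; exact V.smul_mem _ hj
      · rw [hid, _root_.map_smul, hje, he, ← pow_succ', ← pow_succ, ← two_smul ℂ, smul_smul]
        norm_num
  -- polynomial evaluation
  have hPoly : ∀ A ∈ V, ∀ r : Polynomial ℂ, (Polynomial.aeval A r ∈ V) ∧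
      Ψ (Polynomial.aeval A r) = Polynomial.aeval (Ψ A) r := by
    intro A hA r
    induction r using Polynomial.induction_on' with
    | add f g hf hg =>
      refine ⟨by rw [map_add]; exact V.add_mem hf.1 hg.1, ?_⟩
      rw [map_add, map_add, hf.2, hg.2, map_add]
    | monomial m a =>
      obtain ⟨hm, he⟩ := hPow A hA m
      rw [Polynomial.aeval_monomial, Polynomial.aeval_monomial, ← Algebra.smul_def,
        ← Algebra.smul_def]
      exact ⟨V.smul_mem _ hm, by rw [_root_.map_smul, he]⟩
  -- inverses
  have hInvV : ∀ A ∈ V, IsUnit A →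
      A⁻¹ ∈ V ∧ IsUnit (Ψ A) ∧ Ψ A⁻¹ = (Ψ A)⁻¹ := by
    intro A hA hU
    have hdet : IsUnit A.det := (Matrix.isUnit_iff_isUnit_det A).mp hU
    have hdet0 : A.det ≠ 0 := by simpa [isUnit_iff_ne_zero] using hdet
    have hCH : Polynomial.aeval A A.charpoly = 0 := Matrix.aeval_self_charpoly A
    set c0 := A.charpoly.coeff 0 with hc0def
    have hc0 : c0 ≠ 0 := by
      intro h
      apply hdet0
      rw [Matrix.det_eq_sign_charpoly_coeff, ← hc0def, h, mul_zero]
    have hcn : (-c0) ≠ 0 := neg_ne_zero.mpr hc0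
    set B0 := Polynomial.aeval A A.charpoly.divX with hB0def
    have hsplit : B0 * A + c0 • (1 : Matrix (Fin p) (Fin p) ℂ) = 0 := by
      have h1 : A.charpoly.divX * Polynomial.X + Polynomial.C c0 = A.charpoly :=
        Polynomial.divX_mul_X_add A.charpoly
      have h2 := congrArg (Polynomial.aeval A) h1
      rw [map_add, _root_.map_mul, Polynomial.aeval_X, Polynomial.aeval_C, hCH,
        Algebra.algebraMap_eq_smul_one] at h2
      exact h2
    have hBA : B0 * A = (-c0) • 1 := by
      have := eq_neg_of_add_eq_zero_left hsplit
      rw [this, neg_smul]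
    have hAB : A * B0 = (-c0) • 1 := by
      have hcomm : A * B0 = B0 * A := by
        have h1 : Polynomial.X * A.charpoly.divX = A.charpoly.divX * Polynomial.X :=
          mul_comm _ _
        have h2 := congrArg (Polynomial.aeval A) h1
        rwa [_root_.map_mul, _root_.map_mul, Polynomial.aeval_X] at h2
      rw [hcomm, hBA]
    have hABi : A * ((-c0)⁻¹ • B0) = 1 := by
      rw [mul_smul_comm, hAB, smul_smul, inv_mul_cancel₀ hcn, one_smul]
    have hInvA : A⁻¹ = (-c0)⁻¹ • B0 := Matrix.inv_eq_right_inv hABi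
    -- image side
    have hΨB0 : Ψ B0 = Polynomial.aeval (Ψ A) A.charpoly.divX := (hPoly A hA _).2
    have hΨcp : Polynomial.aeval (Ψ A) A.charpoly = 0 := by
      rw [← (hPoly A hA A.charpoly).2, hCH, map_zero]
    have hsplit' : Polynomial.aeval (Ψ A) A.charpoly.divX * Ψ A
        + c0 • (1 : Matrix (Fin q) (Fin q) ℂ) = 0 := by
      have h1 : A.charpoly.divX * Polynomial.X + Polynomial.C c0 = A.charpoly :=
        Polynomial.divX_mul_X_add A.charpoly
      have h2 := congrArg (Polynomial.aeval (Ψ A)) h1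
      rw [map_add, _root_.map_mul, Polynomial.aeval_X, Polynomial.aeval_C, hΨcp,
        Algebra.algebraMap_eq_smul_one] at h2
      exact h2
    have hBA' : Polynomial.aeval (Ψ A) A.charpoly.divX * Ψ A = (-c0) • 1 := by
      have := eq_neg_of_add_eq_zero_left hsplit'
      rw [this, neg_smul]
    have hAB' : Ψ A * Polynomial.aeval (Ψ A) A.charpoly.divX = (-c0) • 1 := by
      have hcomm : Ψ A * Polynomial.aeval (Ψ A) A.charpoly.divX
          = Polynomial.aeval (Ψ A) A.charpoly.divX * Ψ A := by
        have h1 : Polynomial.X * A.charpoly.divX = A.charpoly.divX * Polynomial.X :=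
          mul_comm _ _
        have h2 := congrArg (Polynomial.aeval (Ψ A)) h1
        rwa [_root_.map_mul, _root_.map_mul, Polynomial.aeval_X] at h2
      rw [hcomm, hBA']
    have hABi' : Ψ A * ((-c0)⁻¹ • Polynomial.aeval (Ψ A) A.charpoly.divX) = 1 := by
      rw [mul_smul_comm, hAB', smul_smul, inv_mul_cancel₀ hcn, one_smul]
    have hBAi' : ((-c0)⁻¹ • Polynomial.aeval (Ψ A) A.charpoly.divX) * Ψ A = 1 := by
      rw [smul_mul_assoc, hBA', smul_smul, inv_mul_cancel₀ hcn, one_smul]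
    refine ⟨?_, ?_, ?_⟩
    · rw [hInvA]; exact V.smul_mem _ (hPoly A hA _).1
    · exact ⟨⟨Ψ A, _, hABi', hBAi'⟩, rfl⟩
    · rw [hInvA, _root_.map_smul, hΨB0]
      exact (Matrix.inv_eq_right_inv hABi').symm
  -- assemble the four conclusions
  refine ⟨?_, ?_, ?_, ?_⟩
  · intro A B
    obtain ⟨hm, he⟩ := hJor (A : Matrix (Fin p) (Fin p) ℂ) A.2 (B : Matrix (Fin p) (Fin p) ℂ) B.2
    refine ⟨hm, ?_⟩
    rw [← hΨ _ hm, he, hΨ _ A.2, hΨ _ B.2]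
  · intro A hU
    obtain ⟨hm, hunit, he⟩ := hInvV (A : Matrix (Fin p) (Fin p) ℂ) A.2 hU
    refine ⟨by rwa [hΨ _ A.2] at hunit, hm, ?_⟩
    rw [← hΨ _ hm, he, hΨ _ A.2]
  · intro A r _
    obtain ⟨hm, he⟩ := hPow (A : Matrix (Fin p) (Fin p) ℂ) A.2 r
    refine ⟨hm, ?_⟩
    rw [← hΨ _ hm, he, hΨ _ A.2]
  · intro A hU r hr
    match r, hr with
    | Int.negSucc m, _ =>
      obtain ⟨hm, he⟩ := hPow (A : Matrix (Fin p) (Fin p) ℂ) A.2 (m + 1)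
      have hUm : IsUnit ((A : Matrix (Fin p) (Fin p) ℂ) ^ (m + 1)) := hU.pow _
      obtain ⟨hm', _, he'⟩ := hInvV _ hm hUm
      have hzp : (A : Matrix (Fin p) (Fin p) ℂ) ^ (Int.negSucc m)
          = ((A : Matrix (Fin p) (Fin p) ℂ) ^ (m + 1))⁻¹ := zpow_negSucc _ _
      have hmem : (A : Matrix (Fin p) (Fin p) ℂ) ^ (Int.negSucc m) ∈ V := hzp ▸ hm'
      refine ⟨hmem, ?_⟩
      rw [← hΨ _ hmem]
      have : Ψ ((A : Matrix (Fin p) (Fin p) ℂ) ^ (Int.negSucc m))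
          = Ψ (((A : Matrix (Fin p) (Fin p) ℂ) ^ (m + 1))⁻¹) := by rw [hzp]
      rw [this, he', he, hΨ _ A.2, ← zpow_negSucc]
end

section
/- Let k be an integer with k ∉ {0,1}, and let S be an open neighborhood of I_n in D_n(ℂ) consisting of invertible matrices. A linear bijection ψ : D_n(ℂ) → D_n(ℂ) satisfies ψ(A^k) = ψ(A)^k for all A ∈ S if and only if there exist a diagonal matrix C ∈ D_n(ℂ) with C^{k-1} = I_n and a permutation matrix P ∈ M_n(ℂ) such that ψ(A) = PCAP⁻¹ for all A ∈ D_n(ℂ). -/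
/-!
Write `ψ (diagonal d) = diagonal (M *ᵥ d)`; injectivity of `ψ` makes `M` invertible. Testing
the power identity on `d = (x on s, 1 off s)` for a set of columns `s` gives, in row `i`,
`a + b x ^ k = (a + b x) ^ k` for `x` near `1`, where `b` is the sum of the entries of the row
over `s` and `a` the sum over the other columns. Differentiating twice at `x = 1` (this is
where `k ≠ 0, 1` enters) shows that `b ≠ 0` forces `a = 0` and `b ^ (k - 1) = 1`. Taking for
`s` one or two columns, every row of `M` has a single nonzero entry, a `(k - 1)`-th root of
unity, so `M` is a permutation matrix times such a diagonal matrix.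
-/

open Filter Topology

section Scalar

variable {𝕜 : Type*} [NontriviallyNormedField 𝕜]

theorem eventually_zpow_sub_one_eq_of_eventually_zpow_eq {p q r s a b : 𝕜} {m : ℤ}
    (hm : (m : 𝕜) ≠ 0) (hab : a + b ≠ 0 ∨ 0 ≤ m)
    (h : ∀ᶠ x in 𝓝 1, p + q * x ^ m = r + s * (a + b * x) ^ m) :
    ∀ᶠ x in 𝓝 1, q * x ^ (m - 1) = s * b * (a + b * x) ^ (m - 1) := by
  have hreg : ∀ᶠ x in 𝓝 (1 : 𝕜), x ≠ 0 ∧ (a + b * x ≠ 0 ∨ 0 ≤ m) := by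
    refine (continuousAt_id.eventually_ne one_ne_zero).and ?_
    rcases hab with hab | hm
    · exact (Continuous.continuousAt (by fun_prop) |>.eventually_ne (by simpa using hab)).mono
        fun _ => Or.inl
    · exact .of_forall fun _ => Or.inr hm
  have hderiv := Filter.EventuallyEq.deriv (f₁ := fun x => p + q * x ^ m)
    (f := fun x => r + s * (a + b * x) ^ m) h
  filter_upwards [hderiv, hreg] with x hx ⟨hx0, hxa⟩
  have hl := ((hasDerivAt_zpow m x (.inl hx0)).const_mul q).const_add p
  have hr : HasDerivAt (fun x => r + s * (a + b * x) ^ m)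
      (s * (m * (a + b * x) ^ (m - 1) * b)) x := by
    simpa using (((hasDerivAt_zpow m _ hxa).comp x
      (((hasDerivAt_id x).const_mul b).const_add a)).const_mul s).const_add r
  rw [hl.deriv, hr.deriv] at hx
  apply mul_left_cancel₀ hm
  linear_combination hx

/-- The first and second derivatives at `x = 1` give `(a + b) ^ (k - 1) = 1` and
`b (a + b) ^ (k - 2) = 1`. -/
theorem eq_zero_of_eventually_add_mul_zpow [CharZero 𝕜] {a b : 𝕜} {k : ℤ} (hk0 : k ≠ 0)
    (hk1 : k ≠ 1) (hb : b ≠ 0) (hab : a + b ≠ 0 ∨ 0 ≤ k)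
    (h : ∀ᶠ x in 𝓝 1, a + b * x ^ k = (a + b * x) ^ k) :
    a = 0 ∧ b ^ (k - 1) = 1 := by
  have h1 := eventually_zpow_sub_one_eq_of_eventually_zpow_eq (r := 0) (s := 1)
    (by exact_mod_cast hk0) hab (by simpa using h)
  have he : (a + b) ^ (k - 1) = 1 := by
    have := h1.self_of_nhds
    simp only [one_zpow, mul_one, one_mul] at this
    exact mul_left_cancel₀ hb (by simpa using this.symm)
  have hab' : a + b ≠ 0 := fun h0 => by
    rw [h0, zero_zpow _ (sub_ne_zero.2 hk1)] at he
    exact zero_ne_one he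
  have h2 := eventually_zpow_sub_one_eq_of_eventually_zpow_eq
    (p := 0) (q := b) (r := 0) (s := b)
    (by exact_mod_cast sub_ne_zero.2 hk1) (.inl hab') (h1.mono fun x hx => by simpa using hx)
  have he2 : b * (a + b) ^ (k - 1 - 1) = 1 := by
    have := h2.self_of_nhds
    simp only [one_zpow, mul_one] at this
    exact mul_left_cancel₀ hb (by simpa [mul_assoc] using this.symm)
  have hb' : a + b = b :=
    calc a + b = (a + b) * (b * (a + b) ^ (k - 1 - 1)) := by rw [he2, mul_one]
      _ = b * (a + b) ^ (k - 1) := by rw [mul_left_comm, ← zpow_one_add₀ hab', add_sub_cancel]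
      _ = b := by rw [he, mul_one]
  exact ⟨by simpa using hb', by rwa [hb'] at he⟩

end Scalar

theorem Pi.isUnit_of_zpow_eq_one {ι K : Type*} [Field K] {c : ι → K} {m : ℤ} (hm : m ≠ 0)
    (hc : c ^ m = 1) : IsUnit c :=
  Pi.isUnit_iff.2 fun j => isUnit_iff_ne_zero.2 fun h0 =>
    hm (zero_zpow_eq_one₀.1 (by simpa [h0] using congrFun hc j))

theorem Function.support_subsingleton_of_sum_compl_eq_zero {ι K : Type*} [Fintype ι]
    [DecidableEq ι] [Field K] [NeZero (2 : K)] {r : ι → K}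
    (h : ∀ s : Finset ι, ∑ j ∈ s, r j ≠ 0 → ∑ j ∈ sᶜ, r j = 0) :
    (Function.support r).Subsingleton := by
  intro j hj l hl
  by_contra hne
  have htotal : ∀ i, r i ≠ 0 → ∑ x, r x = r i := fun i hi => by
    rw [← Finset.sum_add_sum_compl {i}, h {i} (by simpa), Finset.sum_singleton, add_zero]
  have hsum : ∑ x, r x ≠ 0 := htotal j hj ▸ hj
  have hpair : ∑ x ∈ {j, l}, r x = 2 * ∑ x, r x := by
    rw [Finset.sum_pair hne, ← htotal j hj, ← htotal l hl, two_mul]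
  have := Finset.sum_add_sum_compl {j, l} r
  rw [h {j, l} (by rw [hpair]; exact mul_ne_zero two_ne_zero hsum), hpair, add_zero] at this
  exact hsum (by linear_combination this)

namespace Matrix

variable {ι K : Type*} [Fintype ι] [Field K]

theorem mulVec_eq_of_ne_zero_iff {M : Matrix ι ι K} {σ : Equiv.Perm ι}
    (hσ : ∀ i j, M i j ≠ 0 ↔ σ i = j) (d : ι → K) :
    M *ᵥ d = fun i => M i (σ i) * d (σ i) := by
  funext i
  refine Finset.sum_eq_single (σ i) (fun j _ hj => ?_) (by simp)
  simp [not_ne_iff.1 fun hij => hj ((hσ i j).1 hij).symm]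

variable [DecidableEq ι]

theorem diagonal_zpow {v : ι → K} {k : ℤ} (h : IsUnit v ∨ 0 ≤ k) :
    diagonal v ^ k = diagonal (v ^ k) := by
  rcases h with ⟨u, rfl⟩ | hk
  · have h := coe_units_zpow
      (Units.map (diagonalRingHom ι K : (ι → K) →* Matrix ι ι K) u) k
    simpa [← map_zpow, Units.val_zpow_eq_zpow_val] using h.symm
  · lift k to ℕ using hk
    simp [diagonal_pow]

theorem diagonal_zpow_eq_one_iff {v : ι → K} {k : ℤ} (hk : k ≠ 0) :
    diagonal v ^ k = 1 ↔ v ^ k = 1 := by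
  refine ⟨fun h => ?_, fun h => ?_⟩
  · have hv : IsUnit (diagonal v).det := by
      have := isUnit_det_zpow_iff.1 (h ▸ det_one (n := ι) (R := K) ▸ isUnit_one)
      exact this.resolve_right hk
    rw [diagonal_zpow (.inl (isUnit_diagonal.1 ((isUnit_iff_isUnit_det _).2 hv))),
      ← diagonal_one] at h
    exact diagonal_injective h
  · rw [diagonal_zpow (.inl (Pi.isUnit_of_zpow_eq_one hk h)), h, diagonal_one']

theorem zpow_eq_zero_of_not_isUnit {A : Matrix ι ι K} {k : ℤ} (hk : k < 0) (hA : ¬IsUnit A) :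
    A ^ k = 0 := by
  obtain ⟨m, rfl⟩ : ∃ m : ℕ, k = -(m : ℤ) := ⟨k.natAbs, by omega⟩
  rw [zpow_neg_natCast]
  refine nonsing_inv_apply_not_isUnit _ fun h => hA ?_
  rw [det_pow, isUnit_pow_iff (by omega)] at h
  exact (isUnit_iff_isUnit_det A).2 h

theorem permMatrix_mul_diagonal (σ : Equiv.Perm ι) (v : ι → K) :
    σ.permMatrix K * diagonal v = diagonal (v ∘ σ) * σ.permMatrix K := by
  ext i j
  simp only [mul_diagonal, diagonal_mul, PEquiv.toMatrix_apply, Equiv.toPEquiv_apply,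
    Option.mem_def, Option.some.injEq, Function.comp_apply]
  split_ifs with h <;> simp [h]

theorem permMatrix_mul_diagonal_mul_inv (σ : Equiv.Perm ι) (v : ι → K) :
    σ.permMatrix K * diagonal v * (σ.permMatrix K)⁻¹ = diagonal (v ∘ σ) := by
  rw [permMatrix_mul_diagonal, Matrix.mul_assoc, mul_nonsing_inv _ ?_, Matrix.mul_one]
  rw [det_permutation]
  exact (Equiv.Perm.sign σ).isUnit.map (Int.castRingHom K)

theorem exists_perm_ne_zero_iff_of_support_subsingleton {M : Matrix ι ι K} (hM : IsUnit M)
    (h : ∀ i, (Function.support (M i)).Subsingleton) :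
    ∃ σ : Equiv.Perm ι, ∀ i j, M i j ≠ 0 ↔ σ i = j := by
  have hdet : M.det ≠ 0 := ((isUnit_iff_isUnit_det M).1 hM).ne_zero
  have hrow : ∀ i, ∃ j, M i j ≠ 0 := fun i => by
    by_contra! hi
    exact hdet (det_eq_zero_of_row_eq_zero i hi)
  choose τ hτ using hrow
  have hτ' : ∀ i j, M i j ≠ 0 ↔ τ i = j := fun i j =>
    ⟨fun hj => h i (hτ i) hj, fun e => e ▸ hτ i⟩
  have hsurj : Function.Surjective τ := fun j => by
    by_contra! hj
    exact hdet <| det_eq_zero_of_column_eq_zero j fun i =>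
      not_not.1 fun hij => hj i ((hτ' i j).1 hij)
  exact ⟨Equiv.ofBijective τ (Finite.surjective_iff_bijective.1 hsurj), hτ'⟩

theorem permMatrix_mul_diagonal_mul_diagonal_mul_inv (σ : Equiv.Perm ι) (c v : ι → K) :
    σ.permMatrix K * diagonal c * diagonal v * (σ.permMatrix K)⁻¹ =
      diagonal ((c * v) ∘ σ) := by
  rw [Matrix.mul_assoc (σ.permMatrix K), diagonal_mul_diagonal', permMatrix_mul_diagonal_mul_inv]
  rfl

theorem map_diagonal_zpow_of_eq_permMatrix_conj {ψ : Matrix ι ι K → Matrix ι ι K} {k : ℤ}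
    (hk1 : k ≠ 1) {c : ι → K} (hc : c ^ (k - 1) = 1) {σ : Equiv.Perm ι}
    (hψ : ∀ A : Matrix ι ι K, A.IsDiag →
      ψ A = σ.permMatrix K * diagonal c * A * (σ.permMatrix K)⁻¹)
    {a : ι → K} (ha : IsUnit a) :
    ψ (diagonal a ^ k) = ψ (diagonal a) ^ k := by
  have hcu := Pi.isUnit_of_zpow_eq_one (sub_ne_zero.2 hk1) hc
  have hcau : IsUnit ((c * a) ∘ σ) :=
    Pi.isUnit_iff.2 fun i => Pi.isUnit_iff.1 (hcu.mul ha) (σ i)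
  rw [diagonal_zpow (.inl ha), hψ _ (isDiag_diagonal _), hψ _ (isDiag_diagonal _),
    permMatrix_mul_diagonal_mul_diagonal_mul_inv, permMatrix_mul_diagonal_mul_diagonal_mul_inv,
    diagonal_zpow (.inl hcau)]
  congr 1
  funext i
  have hci : c (σ i) ^ k = c (σ i) := by
    rw [← sub_add_cancel k 1, zpow_add_one₀ (Pi.isUnit_iff.1 hcu (σ i)).ne_zero,
      ← Pi.pow_apply, hc, Pi.one_apply, one_mul]
  simp [mul_zpow, hci]

theorem mulVec_piecewise_apply (M : Matrix ι ι K) (s : Finset ι) (x : K) (i : ι) :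
    (M *ᵥ s.piecewise (fun _ => x) 1) i = ∑ j ∈ sᶜ, M i j + (∑ j ∈ s, M i j) * x := by
  simp [mulVec, dotProduct, Finset.piecewise, Finset.sum_ite, Finset.sum_mul,
    Finset.compl_eq_univ_sdiff, Finset.filter_not, add_comm]

section PowerPreserving

variable {𝕜 : Type*} [NontriviallyNormedField 𝕜] [CharZero 𝕜] {k : ℤ}

theorem sum_compl_eq_zero_of_eventually_mulVec_zpow {M : Matrix ι ι 𝕜} (hk0 : k ≠ 0)
    (hk1 : k ≠ 1) (h1 : IsUnit (M *ᵥ 1) ∨ 0 ≤ k)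
    (hpow : ∀ᶠ d in 𝓝 1, M *ᵥ d ^ k = (M *ᵥ d) ^ k) (i : ι) {s : Finset ι}
    (hs : ∑ j ∈ s, M i j ≠ 0) :
    ∑ j ∈ sᶜ, M i j = 0 ∧ (∑ j ∈ s, M i j) ^ (k - 1) = 1 := by
  refine eq_zero_of_eventually_add_mul_zpow hk0 hk1 hs ?_ ?_
  · refine h1.imp_left fun hu => ?_
    rw [add_comm, Finset.sum_add_sum_compl]
    simpa [mulVec, dotProduct] using (Pi.isUnit_iff.1 hu i).ne_zero
  · have hv : Tendsto (fun x : 𝕜 => s.piecewise (fun _ => x) 1) (𝓝 1) (𝓝 1) := by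
      have : Continuous fun x : 𝕜 => s.piecewise (fun _ => x) 1 := by
        refine continuous_pi fun j => ?_
        by_cases hj : j ∈ s <;> simp [hj, continuous_const, continuous_id']
      convert this.tendsto 1
      exact (Finset.piecewise_same ..).symm
    filter_upwards [hv.eventually hpow] with x hx
    have hpw : s.piecewise (fun _ => x) 1 ^ k = s.piecewise (fun _ => x ^ k) 1 := by
      funext j
      by_cases hj : j ∈ s <;> simp [hj]
    have := congrFun hx i
    rw [hpw, Pi.pow_apply, mulVec_piecewise_apply, mulVec_piecewise_apply] at this
    linear_combination this

theorem exists_perm_of_eventually_mulVec_zpow {M : Matrix ι ι 𝕜} (hM : IsUnit M)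
    (hk0 : k ≠ 0) (hk1 : k ≠ 1) (h1 : IsUnit (M *ᵥ 1) ∨ 0 ≤ k)
    (hpow : ∀ᶠ d in 𝓝 1, M *ᵥ d ^ k = (M *ᵥ d) ^ k) :
    ∃ (c : ι → 𝕜) (σ : Equiv.Perm ι), c ^ (k - 1) = 1 ∧
      ∀ d, M *ᵥ d = (c * d) ∘ σ := by
  have hrow := fun i s =>
    sum_compl_eq_zero_of_eventually_mulVec_zpow hk0 hk1 h1 hpow i (s := s)
  obtain ⟨σ, hσ⟩ := exists_perm_ne_zero_iff_of_support_subsingleton hM fun i =>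
    Function.support_subsingleton_of_sum_compl_eq_zero fun s hs => (hrow i s hs).1
  refine ⟨fun j => M (σ.symm j) j, σ, funext fun j => ?_, fun d => ?_⟩
  · simpa using (hrow (σ.symm j) {j} (by simp [hσ])).2
  · rw [mulVec_eq_of_ne_zero_iff hσ]
    funext i
    simp

end PowerPreserving

section DiagonalRestriction

variable {ψ : Matrix ι ι K → Matrix ι ι K} (hψ : IsLinearMap K ψ)

noncomputable def diagonalRestrictionMatrix : Matrix ι ι K :=
  LinearMap.toMatrix' (diagLinearMap ι K K ∘ₗ hψ.mk' ψ ∘ₗ diagonalLinearMap ι K K)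

theorem apply_diagonal_eq_diagonal_mulVec
    (hdiag : ∀ A : Matrix ι ι K, A.IsDiag → (ψ A).IsDiag) (d : ι → K) :
    ψ (diagonal d) = diagonal (diagonalRestrictionMatrix hψ *ᵥ d) := by
  rw [diagonalRestrictionMatrix, LinearMap.toMatrix'_mulVec]
  exact (hdiag _ (isDiag_diagonal d)).diagonal_diag.symm

theorem isUnit_diagonalRestrictionMatrix
    (hdiag : ∀ A : Matrix ι ι K, A.IsDiag → (ψ A).IsDiag)
    (hinj : ∀ A B : Matrix ι ι K, A.IsDiag → B.IsDiag → ψ A = ψ B → A = B) :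
    IsUnit (diagonalRestrictionMatrix hψ) :=
  mulVec_injective_iff_isUnit.1 fun d e h => diagonal_injective <|
    hinj _ _ (isDiag_diagonal d) (isDiag_diagonal e) <| by
      simp only [apply_diagonal_eq_diagonal_mulVec hψ hdiag, h]

/-- For `k < 0` a singular `ψ (diagonal d)` would have `k`-th power `0` (junk value of `⁻¹`),
which forces `d ^ k = 0`. -/
theorem mulVec_zpow_of_map_diagonal_zpow
    (hdiag : ∀ A : Matrix ι ι K, A.IsDiag → (ψ A).IsDiag)
    (hinj : ∀ A B : Matrix ι ι K, A.IsDiag → B.IsDiag → ψ A = ψ B → A = B)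
    {d : ι → K} (hd : IsUnit d) {k : ℤ}
    (h : ψ (diagonal d ^ k) = ψ (diagonal d) ^ k) :
    diagonalRestrictionMatrix hψ *ᵥ d ^ k = (diagonalRestrictionMatrix hψ *ᵥ d) ^ k ∧
      (IsUnit (diagonalRestrictionMatrix hψ *ᵥ d) ∨ 0 ≤ k) := by
  set M := diagonalRestrictionMatrix hψ
  simp only [diagonal_zpow (.inl hd), apply_diagonal_eq_diagonal_mulVec hψ hdiag] at h
  have hu : IsUnit (M *ᵥ d) ∨ 0 ≤ k := by
    refine (lt_or_ge k 0).imp_left fun hk => ?_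
    by_contra hnu
    rw [zpow_eq_zero_of_not_isUnit hk (mt isUnit_diagonal.1 hnu), diagonal_eq_zero] at h
    have hdk : d ^ k = 0 := mulVec_injective_iff_isUnit.2
      (isUnit_diagonalRestrictionMatrix hψ hdiag hinj) (h.trans (mulVec_zero M).symm)
    have hdku : IsUnit (d ^ k) := by simpa using (hd.unit ^ k).isUnit
    have := subsingleton_of_zero_eq_one (isUnit_zero_iff.1 (hdk ▸ hdku))
    exact hnu (isUnit_of_subsingleton _)
  exact ⟨diagonal_injective (h.trans (diagonal_zpow hu)), hu⟩

end DiagonalRestriction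

end Matrix

open Matrix

theorem stmt_16_general (n : ℕ) (k : ℤ) (hk0 : k ≠ 0) (hk1 : k ≠ 1)
    (S : Set (Matrix (Fin n) (Fin n) ℂ))
    (hSopen : ∃ U : Set (Matrix (Fin n) (Fin n) ℂ), IsOpen U ∧
      S = U ∩ {A : Matrix (Fin n) (Fin n) ℂ | A.IsDiag})
    (hS1 : 1 ∈ S) (hSinv : ∀ A ∈ S, IsUnit A)
    (ψ : Matrix (Fin n) (Fin n) ℂ → Matrix (Fin n) (Fin n) ℂ)
    (hψlin : IsLinearMap ℂ ψ)
    (hψdiag : ∀ A : Matrix (Fin n) (Fin n) ℂ, A.IsDiag → (ψ A).IsDiag)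
    (hψinj : ∀ A B : Matrix (Fin n) (Fin n) ℂ, A.IsDiag → B.IsDiag → ψ A = ψ B → A = B) :
    (∀ A ∈ S, ψ (A ^ k) = ψ A ^ k) ↔
    ∃ (C P : Matrix (Fin n) (Fin n) ℂ) (σ : Equiv.Perm (Fin n)),
      C.IsDiag ∧ C ^ (k - 1) = 1 ∧ P = σ.permMatrix ℂ ∧
      ∀ A : Matrix (Fin n) (Fin n) ℂ, A.IsDiag → ψ A = P * C * A * P⁻¹ := by
  obtain ⟨U, hU, rfl⟩ := hSopen
  constructor
  · intro hpow
    have hnear : ∀ᶠ d in 𝓝 (1 : Fin n → ℂ), diagonal d ∈ U :=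
      continuous_id.matrix_diagonal.continuousAt.preimage_mem_nhds
        (hU.mem_nhds (by simpa using hS1.1))
    have hvec := hnear.mono fun d hd => mulVec_zpow_of_map_diagonal_zpow hψlin hψdiag hψinj
      (isUnit_diagonal.1 (hSinv _ ⟨hd, isDiag_diagonal d⟩)) (hpow _ ⟨hd, isDiag_diagonal d⟩)
    obtain ⟨c, σ, hc, hMσ⟩ := exists_perm_of_eventually_mulVec_zpow
      (isUnit_diagonalRestrictionMatrix hψlin hψdiag hψinj) hk0 hk1 hvec.self_of_nhds.2
      (hvec.mono fun _ h => h.1)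
    refine ⟨diagonal c, σ.permMatrix ℂ, σ, isDiag_diagonal c,
      (diagonal_zpow_eq_one_iff (sub_ne_zero.2 hk1)).2 hc, rfl, fun A hA => ?_⟩
    rw [← hA.diagonal_diag, apply_diagonal_eq_diagonal_mulVec hψlin hψdiag, hMσ,
      permMatrix_mul_diagonal_mul_diagonal_mul_inv]
  · rintro ⟨C, P, σ, hC, hCk, rfl, hψ⟩ A hA
    obtain ⟨c, rfl⟩ : ∃ c, C = diagonal c := ⟨C.diag, hC.diagonal_diag.symm⟩
    obtain ⟨a, rfl⟩ : ∃ a, A = diagonal a := ⟨A.diag, hA.2.diagonal_diag.symm⟩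
    exact map_diagonal_zpow_of_eq_permMatrix_conj hk1
      ((diagonal_zpow_eq_one_iff (sub_ne_zero.2 hk1)).1 hCk) hψ (isUnit_diagonal.1 (hSinv _ hA))

/-- A linear bijection of the diagonal matrices `D_n(ℂ)` preserves `k`-th
powers on an open invertible neighborhood of `I` in `D_n(ℂ)` iff it has the form
`ψ(A) = P C A P⁻¹` for a diagonal `C` with `C^(k-1) = 1` and a permutation matrix `P`. -/
theorem stmt_16 (n : ℕ) (k : ℤ) (hk0 : k ≠ 0) (hk1 : k ≠ 1)
    (S : Set (Matrix (Fin n) (Fin n) ℂ))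
    (hSopen : ∃ U : Set (Matrix (Fin n) (Fin n) ℂ), IsOpen U ∧
      S = U ∩ {A : Matrix (Fin n) (Fin n) ℂ | A.IsDiag})
    (hS1 : 1 ∈ S) (hSinv : ∀ A ∈ S, IsUnit A)
    (ψ : Matrix (Fin n) (Fin n) ℂ → Matrix (Fin n) (Fin n) ℂ)
    (hψlin : IsLinearMap ℂ ψ)
    (hψdiag : ∀ A : Matrix (Fin n) (Fin n) ℂ, A.IsDiag → (ψ A).IsDiag)
    (hψinj : ∀ A B : Matrix (Fin n) (Fin n) ℂ, A.IsDiag → B.IsDiag → ψ A = ψ B → A = B)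
    (hψsurj : ∀ B : Matrix (Fin n) (Fin n) ℂ, B.IsDiag → ∃ A, A.IsDiag ∧ ψ A = B) :
    (∀ A ∈ S, ψ (A ^ k) = ψ A ^ k) ↔
    ∃ (C P : Matrix (Fin n) (Fin n) ℂ) (σ : Equiv.Perm (Fin n)),
      C.IsDiag ∧ C ^ (k - 1) = 1 ∧ P = σ.permMatrix ℂ ∧
      ∀ A : Matrix (Fin n) (Fin n) ℂ, A.IsDiag → ψ A = P * C * A * P⁻¹ :=
  stmt_16_general n k hk0 hk1 S hSopen hS1 hSinv ψ hψlin hψdiag hψinj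
end

section
/- Let k be an integer with k ∉ {0,1}, and let S be an open neighborhood of I_n in T_n(ℂ) consisting of invertible matrices. Two maps φ, ψ : T_n(ℂ) → T_n(ℂ) with ψ complex linear satisfy tr(φ(A)ψ(B)^k) = tr(AB^k) for all A ∈ T_n(ℂ) and all B ∈ S if and only if all of the following hold: (i) φ and ψ map N_n(ℂ) into N_n(ℂ); (ii) there exist an invertible diagonal matrix C ∈ D_n(ℂ) and a permutation matrix P ∈ M_n(ℂ) such that D(φ(A)) = PC^{-k}AP⁻¹ and D(ψ(A)) = PCAP⁻¹ for all A ∈ D_n(ℂ); (iii) D(φ(A)) = D(φ(D(A))) for all A ∈ T_n(ℂ). -/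
open Matrix

/-- `A` is upper triangular: all entries strictly below the diagonal vanish. -/
def UpperTri {n : ℕ} (A : Matrix (Fin n) (Fin n) ℂ) : Prop :=
  ∀ i j : Fin n, j < i → A i j = 0

/-- `A` is strictly upper triangular: all entries on or below the diagonal vanish. -/
def StrictUpperTri {n : ℕ} (A : Matrix (Fin n) (Fin n) ℂ) : Prop :=
  ∀ i j : Fin n, j ≤ i → A i j = 0

/-- `D(A)`: the diagonal matrix with the same diagonal entries as `A`. -/
def diagPart {n : ℕ} (A : Matrix (Fin n) (Fin n) ℂ) : Matrix (Fin n) (Fin n) ℂ :=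
  Matrix.diagonal fun i => A i i

/-!
On upper triangular matrices `tr(X Y^k) = ∑ X_ii Y_ii^k`, so the trace condition only sees
diagonals. Testing it on `B = diag z` near `I`, the `n` functions `z ↦ z_j^k` are linearly
independent and lie in the span of the `n` functions `z ↦ (m z)_i^k`, where `m` is the matrix of
`z ↦ diag(ψ(diag z))`. So each `(m z)_i^k` is a combination of the `z_j^k`, and a second
difference in two coordinates shows that, as `k ∉ {0, 1}`, every row of `m` has exactly one
nonzero entry: `m` is a monomial matrix, and comparing coefficients gives the diagonal of `φ`.
Finally `B = I + tN` with `N` strictly upper triangular forces `(c_i + t ψ(N)_ii)^k = c_i^k` for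
small `t`, hence `ψ(N)_ii = 0`.
-/

open Filter Topology Submodule

theorem eq_zero_of_eventually_add_mul_zpow_eq {𝕜 : Type*} [NontriviallyNormedField 𝕜]
    [CharZero 𝕜] {c u : 𝕜} {k : ℤ} (hc : c ≠ 0) (hk : k ≠ 0)
    (h : ∀ᶠ t in 𝓝 0, (c + t * u) ^ k = c ^ k) : u = 0 := by
  have hline : HasDerivAt (fun t : 𝕜 => c + t * u) u 0 := by
    simpa using ((hasDerivAt_id (0 : 𝕜)).mul_const u).const_add c
  have hderiv := (hasDerivAt_zpow k (c + 0 * u) (by simp [hc])).comp 0 hline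
  have hconst : HasDerivAt (fun t : 𝕜 => (c + t * u) ^ k) 0 0 :=
    (hasDerivAt_const (0 : 𝕜) (c ^ k)).congr_of_eventuallyEq h
  simpa [hk, hc, zpow_ne_zero] using hderiv.unique hconst

theorem Differentiable.eq_zero_of_eventually_eq_zero {f : ℂ → ℂ} (hf : Differentiable ℂ f)
    {z₀ : ℂ} (h : ∀ᶠ z in 𝓝 z₀, f z = 0) (z : ℂ) : f z = 0 :=
  congrFun (AnalyticOnNhd.eq_of_eventuallyEq (fun w _ => hf.analyticAt w)
    analyticOnNhd_const h) z

theorem not_eventually_second_difference_zpow_eq_zero {a : ℂ} {k : ℤ} (hk0 : k ≠ 0)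
    (hk1 : k ≠ 1) (ha : k < 0 → a ≠ 0) :
    ¬ ∀ᶠ x in 𝓝 0, (a + 2 * x) ^ k - 2 * (a + x) ^ k + a ^ k = 0 := by
  intro h
  obtain ⟨K, rfl | rfl⟩ := Int.eq_nat_or_neg k
  · have hK : K ≠ 0 ∧ K ≠ 1 := by omega
    have hpoly := Differentiable.eq_zero_of_eventually_eq_zero
      (f := fun x => (a + 2 * x) ^ K - 2 * (a + x) ^ K + a ^ K) (by fun_prop) (by simpa using h)
    have h2K : (2 : ℂ) ^ K ≠ 2 := by
      exact_mod_cast (Nat.pow_right_injective le_rfl).ne hK.2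
    rcases eq_or_ne a 0 with rfl | ha
    · have := hpoly 1
      simp only [zero_add, mul_one, one_pow, zero_pow hK.1] at this
      exact h2K (by linear_combination this)
    · have := hpoly (-a / 2)
      simp only [show a + 2 * (-a / 2) = 0 by ring, show a + -a / 2 = a / 2 by ring, div_pow,
        zero_pow hK.1] at this
      field_simp at this
      exact h2K (mul_right_cancel₀ (pow_ne_zero K ha) (by linear_combination this))
  · have hK : 0 < K := by omega
    have ha := ha (by omega)
    -- clear the denominators `a`, `a + x`, `a + 2x`, which do not vanish near `0`
    have hcleared : ∀ᶠ x in 𝓝 (0 : ℂ),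
        a ^ K * (a + x) ^ K - 2 * a ^ K * (a + 2 * x) ^ K + (a + x) ^ K * (a + 2 * x) ^ K = 0 := by
      have h1 : ∀ᶠ x in 𝓝 (0 : ℂ), a + x ≠ 0 :=
        (continuous_const.add continuous_id).continuousAt.eventually_ne (by simpa using ha)
      have h2 : ∀ᶠ x in 𝓝 (0 : ℂ), a + 2 * x ≠ 0 :=
        (continuous_const.add (continuous_const.mul continuous_id)).continuousAt.eventually_ne
          (by simpa using ha)
      filter_upwards [h, h1, h2] with x hx hx1 hx2
      simp only [_root_.zpow_neg, zpow_natCast] at hx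
      field_simp at hx
      linear_combination hx
    have := Differentiable.eq_zero_of_eventually_eq_zero (by fun_prop) hcleared (-a / 2)
    simp only [show a + 2 * (-a / 2) = 0 by ring, zero_pow hK.ne', mul_zero, sub_zero,
      add_zero] at this
    exact pow_ne_zero K (mul_ne_zero ha (div_ne_zero ha two_ne_zero))
      (by rw [mul_pow]; linear_combination this)

theorem eventually_add_smul_mem {𝕜 E : Type*} [NontriviallyNormedField 𝕜] [AddCommGroup E]
    [TopologicalSpace E] [IsTopologicalAddGroup E] [Module 𝕜 E] [ContinuousSMul 𝕜 E]
    {W : Set E} {a : E} (hW : W ∈ 𝓝 a) (v : E) : ∀ᶠ t : 𝕜 in 𝓝 0, a + t • v ∈ W := by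
  have hc : Continuous (fun t : 𝕜 => a + t • v) := by fun_prop
  exact (hc.tendsto' 0 a (by simp)).eventually hW

theorem linearIndependent_and_span_eq_of_span_le {K V ι : Type*} [DivisionRing K]
    [AddCommGroup V] [Module K V] [Fintype ι] {v w : ι → V} (hw : LinearIndependent K w)
    (h : span K (Set.range w) ≤ span K (Set.range v)) :
    LinearIndependent K v ∧ span K (Set.range v) = span K (Set.range w) := by
  have : FiniteDimensional K (span K (Set.range v)) := .span_of_finite K (Set.finite_range v)
  have hspan : span K (Set.range w) = span K (Set.range v) :=
    eq_of_le_of_finrank_le h (by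
      rw [finrank_span_eq_card hw]
      exact finrank_range_le_card v)
  refine ⟨?_, hspan.symm⟩
  rw [linearIndependent_iff_card_eq_finrank_span, Set.finrank, ← hspan, finrank_span_eq_card hw]

section PowerFunctions

variable {ι : Type*} [Fintype ι] [DecidableEq ι] {W : Set (ι → ℂ)} {k : ℤ}

theorem linearIndependent_coord_zpow (hW : W ∈ 𝓝 1) (hk : k ≠ 0) :
    LinearIndependent ℂ (fun j (z : W) => (z : ι → ℂ) j ^ k) := by
  rw [Fintype.linearIndependent_iff]
  intro g hg j
  have hsum : ∀ z ∈ W, ∑ i, g i * z i ^ k = 0 := fun z hz => by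
    simpa using congrFun hg ⟨z, hz⟩
  by_contra hgj
  refine one_ne_zero (eq_zero_of_eventually_add_mul_zpow_eq (u := (1 : ℂ)) one_ne_zero hk ?_)
  filter_upwards [eventually_add_smul_mem hW (Pi.single j 1)] with t ht
  have hdiff : ∑ i, g i * ((1 + t • Pi.single j 1 : ι → ℂ) i ^ k - 1) =
      g j * ((1 + t) ^ k - 1) := by
    rw [Finset.sum_eq_single j (fun i _ hi => by simp [hi]) (by simp)]
    simp
  have h1 : ∑ i, g i = 0 := by simpa using hsum 1 (mem_of_mem_nhds hW)
  simp only [mul_sub, mul_one, Finset.sum_sub_distrib] at hdiff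
  rw [hsum _ ht, h1, sub_zero, eq_comm, ← mul_sub_one, mul_eq_zero, sub_eq_zero] at hdiff
  simpa using hdiff.resolve_left hgj

theorem eq_zero_or_eq_zero_of_dotProduct_zpow (hW : W ∈ 𝓝 1) (hk0 : k ≠ 0) (hk1 : k ≠ 1)
    {r e : ι → ℂ} (hr : k < 0 → r ⬝ᵥ 1 ≠ 0) (h : ∀ z ∈ W, (r ⬝ᵥ z) ^ k = ∑ j, e j * z j ^ k)
    {p q : ι} (hpq : p ≠ q) : r p = 0 ∨ r q = 0 := by
  by_contra! hne
  set u : ι → ℂ := Pi.single p (r p)⁻¹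
  set v : ι → ℂ := Pi.single q (r q)⁻¹
  have hu : r ⬝ᵥ u = 1 := by simp [u, dotProduct_single, hne.1]
  have hv : r ⬝ᵥ v = 1 := by simp [v, dotProduct_single, hne.2]
  -- `u` and `v` have disjoint supports, so the right-hand side has vanishing second difference
  have hsep : ∀ x : ℂ, ∑ j, e j * (1 + x • (u + v)) j ^ k + ∑ j, e j * (1 : ι → ℂ) j ^ k =
      ∑ j, e j * (1 + x • u) j ^ k + ∑ j, e j * (1 + x • v) j ^ k := by
    intro x
    simp only [← Finset.sum_add_distrib]
    refine Finset.sum_congr rfl fun j _ => ?_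
    by_cases hjp : j = p
    · subst hjp; simp [u, v, hpq]
    · by_cases hjq : j = q
      · subst hjq; simp [u, v, hjp]; ring
      · simp [u, v, hjp, hjq]
  apply not_eventually_second_difference_zpow_eq_zero hk0 hk1 hr
  filter_upwards [eventually_add_smul_mem hW (u + v), eventually_add_smul_mem hW u,
    eventually_add_smul_mem hW v] with x huv hu' hv'
  have := hsep x
  rw [← h _ huv, ← h _ hu', ← h _ hv', ← h 1 (mem_of_mem_nhds hW)] at this
  simp only [dotProduct_add, dotProduct_smul, hu, hv, smul_eq_mul, mul_one] at this
  rw [show x * (1 + 1) = 2 * x by ring] at this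
  linear_combination this

theorem exists_perm_of_sum_mulVec_zpow (hW : W ∈ 𝓝 1) (hk0 : k ≠ 0) (hk1 : k ≠ 1)
    {m : Matrix ι ι ℂ} (hm : k < 0 → ∀ i, (m *ᵥ 1) i ≠ 0)
    (hsurj : ∀ α : ι → ℂ, ∃ b : ι → ℂ, ∀ z ∈ W, ∑ i, b i * (m *ᵥ z) i ^ k = ∑ j, α j * z j ^ k) :
    ∃ (τ : Equiv.Perm ι) (c : ι → ℂ), (∀ i, c i ≠ 0) ∧ (∀ z i, (m *ᵥ z) i = c i * z (τ i)) ∧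
      ∀ b α : ι → ℂ, (∀ z ∈ W, ∑ i, b i * (m *ᵥ z) i ^ k = ∑ j, α j * z j ^ k) →
        ∀ i, b i = c i ^ (-k) * α (τ i) := by
  set F : ι → W → ℂ := fun j z => (z : ι → ℂ) j ^ k
  set G : ι → W → ℂ := fun i z => (m *ᵥ z) i ^ k
  have hGF : ∀ b α : ι → ℂ, (∀ z ∈ W, ∑ i, b i * (m *ᵥ z) i ^ k = ∑ j, α j * z j ^ k) →
      ∑ i, b i • G i = ∑ j, α j • F j :=
    fun b α h => funext fun z => by simpa [G, F] using h z z.2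
  have hF : LinearIndependent ℂ F := linearIndependent_coord_zpow hW hk0
  obtain ⟨hG, hspan⟩ := linearIndependent_and_span_eq_of_span_le (v := G) hF <|
    span_le.2 <| Set.range_subset_iff.2 fun j => by
      obtain ⟨b, hb⟩ := hsurj (Pi.single j 1)
      exact (mem_span_range_iff_exists_fun ℂ).2 ⟨b, by simp [hGF b _ hb, Pi.single_apply]⟩
  have hrow_ne : ∀ i, ∃ j, m i j ≠ 0 := by
    intro i
    by_contra! h0
    refine hG.ne_zero i (funext fun z => ?_)
    simp [G, mulVec, dotProduct, h0, _root_.zero_zpow k hk0]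
  have hrow_single : ∀ i p q, p ≠ q → m i p = 0 ∨ m i q = 0 := by
    intro i p q hpq
    have hGi : G i ∈ span ℂ (Set.range F) := hspan ▸ subset_span (Set.mem_range_self i)
    obtain ⟨e, he⟩ := (mem_span_range_iff_exists_fun ℂ).1 hGi
    refine eq_zero_or_eq_zero_of_dotProduct_zpow (r := m i) (e := e) hW hk0 hk1
      (fun hk => hm hk i) (fun z hz => ?_) hpq
    simpa [G, F, mulVec] using (congrFun he ⟨z, hz⟩).symm
  choose τ hτ using hrow_ne
  have hmτ : ∀ z i, (m *ᵥ z) i = m i (τ i) * z (τ i) := fun z i =>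
    Finset.sum_eq_single _ (fun j _ hj => by
      simp [(hrow_single i _ _ hj).resolve_right (hτ i)]) (by simp)
  set c : ι → ℂˣ := fun i => Units.mk0 (m i (τ i) ^ k) (zpow_ne_zero k (hτ i))
  have hGτ : G = c • (F ∘ τ) := funext fun i => funext fun z => by
    simp [G, F, c, hmτ, mul_zpow]
  have hFτ : LinearIndependent ℂ (F ∘ τ) := by
    simpa [hGτ, smul_smul] using hG.units_smul c⁻¹
  set σ := Equiv.ofBijective τ hFτ.injective.of_comp.bijective_of_finite
  refine ⟨σ, fun i => m i (τ i), hτ, hmτ, fun b α h i => ?_⟩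
  have hsum := hGF b α h
  rw [← Equiv.sum_comp σ (fun j => α j • F j)] at hsum
  have hcoef := Fintype.linearIndependent_iffₛ.1 hFτ (fun i => b i * c i) (fun i => α (τ i))
    (by simpa [hGτ, mul_smul, Units.smul_def, σ] using hsum) i
  simp only [c, Units.val_mk0] at hcoef
  simp only [σ, Equiv.ofBijective_apply]
  rw [_root_.zpow_neg, ← hcoef]
  field_simp [zpow_ne_zero k (hτ i)]

end PowerFunctions

namespace Matrix

section Triangular

variable {m K : Type*} [Fintype m] [LinearOrder m] [Field K] {M N : Matrix m m K} {k : ℤ}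

theorem zpow_eq_zero_of_not_isUnit_s19 (hM : ¬IsUnit M) (hk : k < 0) : M ^ k = 0 := by
  obtain ⟨n, rfl⟩ := Int.exists_eq_neg_ofNat hk.le
  rw [zpow_neg_natCast]
  refine nonsing_inv_apply_not_isUnit _ fun h => hM ?_
  rw [det_pow] at h
  exact (isUnit_iff_isUnit_det M).2 ((isUnit_pow_iff (by omega : n ≠ 0)).1 h)

namespace IsUpperTriangular

theorem mul_apply_self (hM : M.IsUpperTriangular) (hN : N.IsUpperTriangular) (i : m) :
    (M * N) i i = M i i * N i i := by
  rw [mul_apply]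
  refine Finset.sum_eq_single i (fun j _ hj => ?_) (by simp)
  rcases lt_or_gt_of_ne hj with h | h
  · rw [hM h, zero_mul]
  · rw [hN h, mul_zero]

theorem pow_apply_self (hM : M.IsUpperTriangular) (n : ℕ) (i : m) :
    (M ^ n) i i = M i i ^ n := by
  induction n with
  | zero => simp
  | succ n ih => rw [pow_succ, mul_apply_self (hM.pow n) hM, ih, pow_succ]

theorem isUnit_iff (hM : M.IsUpperTriangular) : IsUnit M ↔ ∀ i, M i i ≠ 0 := by
  rw [isUnit_iff_isUnit_det, det_of_isUpperTriangular hM, isUnit_iff_ne_zero,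
    Finset.prod_ne_zero_iff]
  simp

theorem inv (hM : M.IsUpperTriangular) : M⁻¹.IsUpperTriangular := by
  by_cases h : IsUnit M.det
  · have := M.invertibleOfIsUnitDet h
    exact blockTriangular_inv_of_blockTriangular hM
  · rw [nonsing_inv_apply_not_isUnit M h]
    exact blockTriangular_zero

theorem inv_apply_self (hM : M.IsUpperTriangular) (hu : IsUnit M) (i : m) :
    M⁻¹ i i = (M i i)⁻¹ := by
  have h := hM.inv.mul_apply_self hM i
  rw [nonsing_inv_mul M ((isUnit_iff_isUnit_det M).1 hu), one_apply_eq] at h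
  exact eq_inv_of_mul_eq_one_left h.symm

theorem zpow (hM : M.IsUpperTriangular) (k : ℤ) : (M ^ k).IsUpperTriangular := by
  obtain ⟨n, rfl | rfl⟩ := Int.eq_nat_or_neg k
  · simpa using hM.pow n
  · simpa [zpow_neg_natCast] using inv (hM.pow n)

theorem zpow_apply_self (hM : M.IsUpperTriangular) (h : 0 ≤ k ∨ IsUnit M) (i : m) :
    (M ^ k) i i = M i i ^ k := by
  obtain ⟨n, rfl | rfl⟩ := Int.eq_nat_or_neg k
  · simpa using hM.pow_apply_self n i
  · rcases h with h | h
    · obtain rfl : n = 0 := by omega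
      simp
    · rw [zpow_neg_natCast, inv_apply_self (hM.pow n) (h.pow n), hM.pow_apply_self,
        _root_.zpow_neg, zpow_natCast]

theorem trace_mul_zpow (hM : M.IsUpperTriangular) (hN : N.IsUpperTriangular)
    (h : 0 ≤ k ∨ IsUnit N) : (M * N ^ k).trace = ∑ i, M i i * N i i ^ k :=
  Finset.sum_congr rfl fun i _ => by
    rw [diag_apply, hM.mul_apply_self (hN.zpow k), hN.zpow_apply_self h]

end IsUpperTriangular

end Triangular

section Permutation

variable {m R : Type*} [Fintype m] [DecidableEq m] [CommRing R]

theorem inv_permMatrix (σ : Equiv.Perm m) : (σ.permMatrix R)⁻¹ = σ⁻¹.permMatrix R :=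
  inv_eq_left_inv (by rw [← permMatrix_mul, mul_inv_cancel, permMatrix_one])

theorem permMatrix_mul_mul_inv_apply (σ : Equiv.Perm m) (X : Matrix m m R) (a b : m) :
    (σ.permMatrix R * X * (σ.permMatrix R)⁻¹) a b = X (σ a) (σ b) := by
  rw [inv_permMatrix, PEquiv.toMatrix_toPEquiv_mul, PEquiv.mul_toMatrix_toPEquiv]
  simp [Equiv.Perm.inv_def]

theorem permMatrix_mul_diagonal_mul_mul_inv (σ : Equiv.Perm m) (d : m → R) {A : Matrix m m R}
    (hA : A.IsDiag) :
    σ.permMatrix R * diagonal d * A * (σ.permMatrix R)⁻¹ =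
      diagonal fun i => d (σ i) * A (σ i) (σ i) := by
  ext a b
  rw [Matrix.mul_assoc (σ.permMatrix R), permMatrix_mul_mul_inv_apply, diagonal_mul]
  rcases eq_or_ne a b with rfl | hab
  · simp
  · rw [hA (σ.injective.ne hab), mul_zero, diagonal_apply_ne _ hab]

theorem diagonal_zpow_s19 {K : Type*} [Field K] {d : m → K} (hd : ∀ i, d i ≠ 0) (k : ℤ) :
    diagonal d ^ k = diagonal fun i => d i ^ k := by
  obtain ⟨n, rfl | rfl⟩ := Int.eq_nat_or_neg k
  · simp [diagonal_pow]
  · rw [zpow_neg_natCast, diagonal_pow]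
    refine inv_eq_left_inv ?_
    rw [diagonal_mul_diagonal, ← diagonal_one]
    congr 1
    ext i
    simp [hd i]

end Permutation

end Matrix

section TracePreservers

variable {n : ℕ} {k : ℤ} {S : Set (Matrix (Fin n) (Fin n) ℂ)}
  {φ ψ : Matrix (Fin n) (Fin n) ℂ → Matrix (Fin n) (Fin n) ℂ}
  {A B : Matrix (Fin n) (Fin n) ℂ}

theorem upperTri_iff : UpperTri A ↔ A.IsUpperTriangular :=
  ⟨fun h _ _ hij => h _ _ hij, fun h _ _ hij => h hij⟩

theorem upperTri_diagonal (z : Fin n → ℂ) : UpperTri (diagonal z) :=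
  upperTri_iff.2 (blockTriangular_diagonal z)

theorem upperTri_single (i : Fin n) : UpperTri (single i i (1 : ℂ)) :=
  upperTri_iff.2 (blockTriangular_single le_rfl 1)

theorem StrictUpperTri.upperTri (h : StrictUpperTri A) : UpperTri A :=
  fun i j hij => h i j hij.le

theorem strictUpperTri_sub_diagPart (h : UpperTri A) : StrictUpperTri (A - diagPart A) := by
  intro i j hij
  rcases hij.lt_or_eq with hlt | rfl
  · simp [diagPart, h i j hlt, diagonal_apply_ne _ hlt.ne']
  · simp [diagPart]

theorem IsLinearMap.apply_diagPart_add (hψ : IsLinearMap ℂ ψ) (B : Matrix (Fin n) (Fin n) ℂ) :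
    ψ B = ψ (diagPart B) + ψ (B - diagPart B) := by
  rw [← hψ.map_add, add_sub_cancel]

theorem IsLinearMap.apply_diagonal_apply (hψ : IsLinearMap ℂ ψ) (z : Fin n → ℂ) (a b : Fin n) :
    ψ (diagonal z) a b = ∑ j, ψ (diagonal (Pi.single j 1)) a b * z j := by
  have := LinearMap.pi_apply_eq_sum_univ
    (entryLinearMap ℂ ℂ a b ∘ₗ IsLinearMap.mk' ψ hψ ∘ₗ diagonalLinearMap (Fin n) ℂ ℂ) z
  have hsingle : ∀ j : Fin n, (fun i => if j = i then (1 : ℂ) else 0) = Pi.single j 1 :=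
    fun j => by
      ext i
      simp [Pi.single_apply, eq_comm]
  simpa [mul_comm, hsingle] using this

/-- Coordinate form of `D(φ A) = P C^{-k} D(A) P⁻¹` and `D(ψ B) = P C D(B) P⁻¹`, where `P` is
the permutation matrix of `τ` and `C = diag(c ∘ τ⁻¹)`. -/
structure StandardDiagonals (k : ℤ) (φ ψ : Matrix (Fin n) (Fin n) ℂ → Matrix (Fin n) (Fin n) ℂ)
    (τ : Equiv.Perm (Fin n)) (c : Fin n → ℂ) : Prop where
  ne_zero : ∀ i, c i ≠ 0
  fst_apply_self : ∀ A, UpperTri A → ∀ i, φ A i i = c i ^ (-k) * A (τ i) (τ i)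
  snd_apply_self : ∀ B, UpperTri B → ∀ i, ψ B i i = c i * B (τ i) (τ i)

namespace StandardDiagonals

variable {τ : Equiv.Perm (Fin n)} {c : Fin n → ℂ}

theorem trace_mul_zpow_eq (h : StandardDiagonals k φ ψ τ c)
    (hφT : ∀ A, UpperTri A → UpperTri (φ A)) (hψT : ∀ B, UpperTri B → UpperTri (ψ B))
    (hA : UpperTri A) (hB : UpperTri B) (hBu : IsUnit B) :
    (φ A * ψ B ^ k).trace = (A * B ^ k).trace := by
  have hB' := upperTri_iff.1 hB
  have hψB := upperTri_iff.1 (hψT B hB)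
  have hψBu : IsUnit (ψ B) := hψB.isUnit_iff.2 fun i => by
    rw [h.snd_apply_self B hB]
    exact mul_ne_zero (h.ne_zero i) (hB'.isUnit_iff.1 hBu _)
  rw [(upperTri_iff.1 (hφT A hA)).trace_mul_zpow hψB (.inr hψBu),
    (upperTri_iff.1 hA).trace_mul_zpow hB' (.inr hBu),
    ← Equiv.sum_comp τ (fun i => A i i * B i i ^ k)]
  refine Finset.sum_congr rfl fun i _ => ?_
  rw [h.fst_apply_self A hA, h.snd_apply_self B hB, mul_zpow, _root_.zpow_neg]
  field_simp [zpow_ne_zero k (h.ne_zero i)]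

theorem strictUpperTri_fst (h : StandardDiagonals k φ ψ τ c)
    (hφT : ∀ A, UpperTri A → UpperTri (φ A)) (hA : StrictUpperTri A) :
    StrictUpperTri (φ A) := by
  intro i j hij
  rcases hij.lt_or_eq with hlt | rfl
  · exact hφT A hA.upperTri i j hlt
  · rw [h.fst_apply_self A hA.upperTri, hA _ _ le_rfl, mul_zero]

theorem strictUpperTri_snd (h : StandardDiagonals k φ ψ τ c)
    (hψT : ∀ B, UpperTri B → UpperTri (ψ B)) (hB : StrictUpperTri B) :
    StrictUpperTri (ψ B) := by
  intro i j hij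
  rcases hij.lt_or_eq with hlt | rfl
  · exact hψT B hB.upperTri i j hlt
  · rw [h.snd_apply_self B hB.upperTri, hB _ _ le_rfl, mul_zero]

theorem exists_permMatrix_conj (h : StandardDiagonals k φ ψ τ c) :
    ∃ (C P : Matrix (Fin n) (Fin n) ℂ) (σ : Equiv.Perm (Fin n)),
      C.IsDiag ∧ IsUnit C ∧ P = σ.permMatrix ℂ ∧
      ∀ A : Matrix (Fin n) (Fin n) ℂ, A.IsDiag →
        diagPart (φ A) = P * C ^ (-k) * A * P⁻¹ ∧ diagPart (ψ A) = P * C * A * P⁻¹ := by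
  have hc : ∀ i, (c ∘ τ.symm) i ≠ 0 := fun i => h.ne_zero _
  refine ⟨diagonal (c ∘ τ.symm), _, τ, isDiag_diagonal _, ?_, rfl, fun A hA => ⟨?_, ?_⟩⟩
  · exact isUnit_diagonal.2 (Pi.isUnit_iff.2 fun i => (hc i).isUnit)
  all_goals
    have hAT : UpperTri A := fun i j hij => hA hij.ne'
    rw [diagPart]
  · rw [diagonal_zpow_s19 hc, permMatrix_mul_diagonal_mul_mul_inv _ _ hA]
    simp [h.fst_apply_self A hAT]
  · rw [permMatrix_mul_diagonal_mul_mul_inv _ _ hA]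
    simp [h.snd_apply_self A hAT]

theorem diagPart_fst_diagPart (h : StandardDiagonals k φ ψ τ c) (hA : UpperTri A) :
    diagPart (φ A) = diagPart (φ (diagPart A)) := by
  simp only [diagPart, h.fst_apply_self A hA, h.fst_apply_self _ (upperTri_diagonal _),
    diagonal_apply_eq]

end StandardDiagonals

theorem isUnit_apply_of_trace_mul_zpow_eq (hk : k < 0) (hB : UpperTri B) (hBu : IsUnit B)
    (hψB : UpperTri (ψ B))
    (htr : ∀ A, UpperTri A → (φ A * ψ B ^ k).trace = (A * B ^ k).trace) : IsUnit (ψ B) := by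
  by_contra hψBu
  obtain ⟨i, -⟩ : ∃ i, ψ B i i = 0 := by simpa using mt (upperTri_iff.1 hψB).isUnit_iff.2 hψBu
  have := htr _ (upperTri_single i)
  rw [zpow_eq_zero_of_not_isUnit_s19 hψBu hk, mul_zero, trace_zero, trace_single_mul, one_smul,
    (upperTri_iff.1 hB).zpow_apply_self (.inr hBu)] at this
  exact zpow_ne_zero k ((upperTri_iff.1 hB).isUnit_iff.1 hBu i) this.symm

theorem exists_perm_apply_self_of_sum_eq (hk0 : k ≠ 0) (hk1 : k ≠ 1)
    (hS : S ∈ 𝓝[{B | UpperTri B}] 1) (hψlin : IsLinearMap ℂ ψ)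
    (hψ1 : k < 0 → ∀ i, ψ 1 i i ≠ 0)
    (hsum : ∀ A, UpperTri A → ∀ B ∈ S, ∑ i, φ A i i * ψ B i i ^ k = ∑ i, A i i * B i i ^ k) :
    ∃ (τ : Equiv.Perm (Fin n)) (c : Fin n → ℂ), (∀ i, c i ≠ 0) ∧
      (∀ A, UpperTri A → ∀ i, φ A i i = c i ^ (-k) * A (τ i) (τ i)) ∧
      ∀ z i, ψ (diagonal z) i i = c i * z (τ i) := by
  set m : Matrix (Fin n) (Fin n) ℂ := of fun i j => ψ (diagonal (Pi.single j 1)) i i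
  have hm : ∀ z i, ψ (diagonal z) i i = (m *ᵥ z) i := fun z i =>
    hψlin.apply_diagonal_apply z i i
  have hdiag : Tendsto diagonal (𝓝 (1 : Fin n → ℂ)) (𝓝[{B | UpperTri B}] 1) :=
    tendsto_nhdsWithin_iff.2 ⟨continuous_id.matrix_diagonal.tendsto' _ _ diagonal_one,
      .of_forall upperTri_diagonal⟩
  have hdiagsum : ∀ A, UpperTri A → ∀ z, diagonal z ∈ S →
      ∑ i, φ A i i * (m *ᵥ z) i ^ k = ∑ j, A j j * z j ^ k := fun A hA z hz => by
    simpa [hm] using hsum A hA _ hz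
  obtain ⟨τ, c, hc, hmτ, hcoef⟩ := exists_perm_of_sum_mulVec_zpow (hdiag hS) hk0 hk1
    (fun hk i => by rw [← hm]; simpa using hψ1 hk i)
    fun α => ⟨_, by simpa using hdiagsum _ (upperTri_diagonal α)⟩
  exact ⟨τ, c, hc, fun A hA => hcoef _ _ (hdiagsum A hA), fun z i => by rw [hm, hmτ]⟩

theorem apply_self_eq_zero_of_strictUpperTri (hk0 : k ≠ 0) (hS : S ∈ 𝓝[{B | UpperTri B}] 1)
    (hψlin : IsLinearMap ℂ ψ) {τ : Equiv.Perm (Fin n)} {c : Fin n → ℂ} (hc : ∀ i, c i ≠ 0)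
    (hφ : ∀ A, UpperTri A → ∀ i, φ A i i = c i ^ (-k) * A (τ i) (τ i))
    (hψ1 : ∀ i, ψ 1 i i = c i)
    (hsum : ∀ A, UpperTri A → ∀ B ∈ S, ∑ i, φ A i i * ψ B i i ^ k = ∑ i, A i i * B i i ^ k)
    {N : Matrix (Fin n) (Fin n) ℂ} (hN : StrictUpperTri N) (i : Fin n) : ψ N i i = 0 := by
  refine eq_zero_of_eventually_add_mul_zpow_eq (hc i) hk0 ?_
  have hcont : Continuous fun t : ℂ => 1 + t • N := by fun_prop
  have hline : Tendsto (fun t : ℂ => 1 + t • N) (𝓝 0) (𝓝[{B | UpperTri B}] 1) :=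
    tendsto_nhdsWithin_iff.2 ⟨hcont.tendsto' _ _ (by simp), .of_forall fun t j l hlj => by
      simp [hN j l hlj.le, one_apply_ne hlj.ne']⟩
  filter_upwards [hline hS] with t ht
  have := hsum _ (upperTri_single (τ i)) _ ht
  simp [hφ _ (upperTri_single (τ i)), single_apply, hψlin.map_add, hψlin.map_smul, hψ1,
    hN _ _ le_rfl] at this
  rwa [inv_mul_eq_one₀ (zpow_ne_zero k (hc i)), eq_comm] at this

theorem exists_standardDiagonals (hk0 : k ≠ 0) (hk1 : k ≠ 1) (hS : S ∈ 𝓝[{B | UpperTri B}] 1)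
    (hST : ∀ B ∈ S, UpperTri B) (hSunit : ∀ B ∈ S, IsUnit B)
    (hφT : ∀ A, UpperTri A → UpperTri (φ A)) (hψT : ∀ B, UpperTri B → UpperTri (ψ B))
    (hψlin : IsLinearMap ℂ ψ)
    (htr : ∀ A, UpperTri A → ∀ B ∈ S, (φ A * ψ B ^ k).trace = (A * B ^ k).trace) :
    ∃ τ c, StandardDiagonals k φ ψ τ c := by
  have hunit : ∀ B ∈ S, 0 ≤ k ∨ IsUnit (ψ B) := fun B hB =>
    (le_or_gt 0 k).imp_right fun hk => isUnit_apply_of_trace_mul_zpow_eq hk (hST B hB)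
      (hSunit B hB) (hψT B (hST B hB)) fun A hA => htr A hA B hB
  have hsum : ∀ A, UpperTri A → ∀ B ∈ S,
      ∑ i, φ A i i * ψ B i i ^ k = ∑ i, A i i * B i i ^ k := fun A hA B hB => by
    rw [← (upperTri_iff.1 (hφT A hA)).trace_mul_zpow (upperTri_iff.1 (hψT B (hST B hB)))
      (hunit B hB), ← (upperTri_iff.1 hA).trace_mul_zpow (upperTri_iff.1 (hST B hB))
      (.inr (hSunit B hB))]
    exact htr A hA B hB
  have h1S : (1 : Matrix (Fin n) (Fin n) ℂ) ∈ S :=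
    mem_of_mem_nhdsWithin (upperTri_iff.2 blockTriangular_one) hS
  have hψ1 : k < 0 → ∀ i, ψ 1 i i ≠ 0 := fun hk =>
    (upperTri_iff.1 (hψT 1 (hST 1 h1S))).isUnit_iff.1 ((hunit 1 h1S).resolve_left (by omega))
  obtain ⟨τ, c, hc, hφ, hψdiag⟩ := exists_perm_apply_self_of_sum_eq hk0 hk1 hS hψlin hψ1 hsum
  have hψN : ∀ N, StrictUpperTri N → ∀ i, ψ N i i = 0 := fun N =>
    apply_self_eq_zero_of_strictUpperTri hk0 hS hψlin hc hφ (fun i => by simpa using hψdiag 1 i)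
      hsum
  refine ⟨τ, c, hc, hφ, fun B hB i => ?_⟩
  rw [hψlin.apply_diagPart_add B, Matrix.add_apply, hψN _ (strictUpperTri_sub_diagPart hB),
    add_zero, diagPart, hψdiag]

theorem exists_standardDiagonals_of_conditions (hψlin : IsLinearMap ℂ ψ)
    (hψN : ∀ A, StrictUpperTri A → StrictUpperTri (ψ A))
    (hCP : ∃ (C P : Matrix (Fin n) (Fin n) ℂ) (σ : Equiv.Perm (Fin n)),
      C.IsDiag ∧ IsUnit C ∧ P = σ.permMatrix ℂ ∧
      ∀ A : Matrix (Fin n) (Fin n) ℂ, A.IsDiag →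
        diagPart (φ A) = P * C ^ (-k) * A * P⁻¹ ∧ diagPart (ψ A) = P * C * A * P⁻¹)
    (hφD : ∀ A, UpperTri A → diagPart (φ A) = diagPart (φ (diagPart A))) :
    ∃ τ c, StandardDiagonals k φ ψ τ c := by
  obtain ⟨C, P, σ, hC, hCu, rfl, hCP⟩ := hCP
  obtain ⟨d, rfl⟩ : ∃ d, diagonal d = C := ⟨_, hC.diagonal_diag⟩
  have hd : ∀ i, d i ≠ 0 := fun i => (Pi.isUnit_iff.1 (isUnit_diagonal.1 hCu) i).ne_zero
  refine ⟨σ, d ∘ σ, fun i => hd _, fun A hA i => ?_, fun B hB i => ?_⟩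
  · have := congrFun₂ ((hφD A hA).trans (hCP _ (isDiag_diagonal _)).1) i i
    rw [diagonal_zpow_s19 hd, permMatrix_mul_diagonal_mul_mul_inv _ _ (isDiag_diagonal _)] at this
    simpa [diagPart] using this
  · have := congrFun₂ (hCP _ (isDiag_diagonal fun j => B j j)).2 i i
    rw [permMatrix_mul_diagonal_mul_mul_inv _ _ (isDiag_diagonal _)] at this
    rw [hψlin.apply_diagPart_add B, Matrix.add_apply,
      hψN _ (strictUpperTri_sub_diagPart hB) i i le_rfl, add_zero]
    simpa [diagPart] using this

end TracePreservers

/-- Trace of `k`-power-product preservers on the upper triangular matrices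
`T_n(ℂ)`: the trace condition (with `ψ` complex linear) holds iff (i) `φ` and `ψ` map
strictly upper triangular matrices into strictly upper triangular matrices, (ii) the
diagonal parts of `φ` and `ψ` restricted to diagonal matrices have the form
`A ↦ P C^{-k} A P⁻¹` and `A ↦ P C A P⁻¹`, and (iii) `D ∘ φ = D ∘ φ ∘ D` on `T_n(ℂ)`. -/
theorem stmt_19 (n : ℕ) (k : ℤ) (hk0 : k ≠ 0) (hk1 : k ≠ 1)
    (S : Set (Matrix (Fin n) (Fin n) ℂ))
    (hSopen : ∃ U : Set (Matrix (Fin n) (Fin n) ℂ), IsOpen U ∧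
      S = U ∩ {A : Matrix (Fin n) (Fin n) ℂ | UpperTri A})
    (hS1 : 1 ∈ S) (hSinv : ∀ B ∈ S, IsUnit B)
    (φ ψ : Matrix (Fin n) (Fin n) ℂ → Matrix (Fin n) (Fin n) ℂ)
    (hφT : ∀ A : Matrix (Fin n) (Fin n) ℂ, UpperTri A → UpperTri (φ A))
    (hψT : ∀ A : Matrix (Fin n) (Fin n) ℂ, UpperTri A → UpperTri (ψ A))
    (hψlin : IsLinearMap ℂ ψ) :
    (∀ A : Matrix (Fin n) (Fin n) ℂ, UpperTri A →
      ∀ B ∈ S, (φ A * ψ B ^ k).trace = (A * B ^ k).trace) ↔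
    ((∀ A : Matrix (Fin n) (Fin n) ℂ, StrictUpperTri A → StrictUpperTri (φ A)) ∧
     (∀ A : Matrix (Fin n) (Fin n) ℂ, StrictUpperTri A → StrictUpperTri (ψ A)) ∧
     (∃ (C P : Matrix (Fin n) (Fin n) ℂ) (σ : Equiv.Perm (Fin n)),
        C.IsDiag ∧ IsUnit C ∧ P = σ.permMatrix ℂ ∧
        ∀ A : Matrix (Fin n) (Fin n) ℂ, A.IsDiag →
          diagPart (φ A) = P * C ^ (-k) * A * P⁻¹ ∧
          diagPart (ψ A) = P * C * A * P⁻¹) ∧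
     (∀ A : Matrix (Fin n) (Fin n) ℂ, UpperTri A →
        diagPart (φ A) = diagPart (φ (diagPart A)))) := by
  obtain ⟨U, hU, rfl⟩ := hSopen
  have hS : U ∩ {A | UpperTri A} ∈ 𝓝[{A | UpperTri A}] 1 :=
    mem_nhdsWithin.2 ⟨U, hU, hS1.1, subset_rfl⟩
  constructor
  · intro htr
    obtain ⟨τ, c, h⟩ := exists_standardDiagonals hk0 hk1 hS (fun B hB => hB.2) hSinv hφT hψT
      hψlin htr
    exact ⟨fun A => h.strictUpperTri_fst hφT, fun B => h.strictUpperTri_snd hψT,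
      h.exists_permMatrix_conj, fun A => h.diagPart_fst_diagPart⟩
  · rintro ⟨-, hψN, hCP, hφD⟩ A hA B hB
    obtain ⟨τ, c, h⟩ := exists_standardDiagonals_of_conditions hψlin hψN hCP hφD
    exact h.trace_mul_zpow_eq hφT hψT hA hB.2 (hSinv B hB)
end
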